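/- arXiv:1712.03800 — 12 statements merged into one kernel-verified Lean document; each statement's English description precedes it below -/
import Mathlib

section
/- Let Γ be a finitely generated abelian group and F : Γ → Γ an endomorphism such that, for every integer δ > 0, the element F^δ − 1 is not a zero divisor in the subring of End(Γ) generated by F. Then for every integer r > 0, every γ ∈ Γ and every integer δ ≥ 1, the F-cycle C(γ;δ) can be written as a finite union of translates of F-cycles of the form C(γ';rδ); that is, there are finitely many pairs (β_i, γ'_i) ∈ Γ × Γ with C(γ;δ) = ⋃_i (β_i + C(γ'_i; rδ)). -/
open Pointwise

/-- `[w]_F`: the base-`F` evaluation of a word `w = x₀x₁⋯x_m`,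
namely `x₀ + F x₁ + ⋯ + F^m x_m`, with `[∅]_F = 0`. -/
def wordVal {Γ : Type*} [AddCommGroup Γ] (F : AddMonoid.End Γ) : List Γ → Γ
  | [] => 0
  | x :: xs => x + F (wordVal F xs)

/-- `Sig` is an `F`-spanning set for `Γ`. -/
def IsSpanningSet {Γ : Type*} [AddCommGroup Γ] (F : AddMonoid.End Γ) (Sig : Set Γ) : Prop :=
  Sig.Finite ∧
  (0 : Γ) ∈ Sig ∧ (∀ x ∈ Sig, -x ∈ Sig) ∧
  (∀ x : Γ, F x ∈ Sig → x ∈ Sig) ∧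
  (∀ x : Γ, ∃ w : List Γ, (∀ y ∈ w, y ∈ Sig) ∧ wordVal F w = x) ∧
  (∀ x₁ ∈ Sig, ∀ x₂ ∈ Sig, ∀ x₃ ∈ Sig, ∀ x₄ ∈ Sig, ∀ x₅ ∈ Sig,
    ∃ t ∈ Sig, ∃ t' ∈ Sig, x₁ + x₂ + x₃ + x₄ + x₅ = t + F t') ∧
  (∀ x₁ ∈ Sig, ∀ x₂ ∈ Sig, ∀ x₃ ∈ Sig,
    (∃ y : Γ, x₁ + x₂ + x₃ = F y) → ∃ t ∈ Sig, x₁ + x₂ + x₃ = F t)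

/-- `S` is `(Σ,F)`-automatic: the language of words over `Σ` whose base-`F` value lies
in `S` is a regular language. -/
def IsSFAutomatic {Γ : Type*} [AddCommGroup Γ] (F : AddMonoid.End Γ) (Sig : Set Γ)
    (S : Set Γ) : Prop :=
  Language.IsRegular {w : List ↥Sig | wordVal F (w.map Subtype.val) ∈ S}

/-- `S` is `F`-automatic: `(Σ,F^r)`-automatic for some `r > 0` and `F^r`-spanning set `Σ`. -/
def IsFAutomatic {Γ : Type*} [AddCommGroup Γ] (F : AddMonoid.End Γ) (S : Set Γ) : Prop :=
  ∃ r : ℕ, 0 < r ∧ ∃ Sig : Set Γ, IsSpanningSet (F ^ r) Sig ∧ IsSFAutomatic (F ^ r) Sig S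

/-- The `F`-cycle `C(γ;δ) = {γ + F^δ γ + ⋯ + F^{ℓδ} γ : ℓ ∈ ℕ}`. -/
def FCycle {Γ : Type*} [AddCommGroup Γ] (F : AddMonoid.End Γ) (γ : Γ) (δ : ℕ) : Set Γ :=
  {x | ∃ ℓ : ℕ, x = ∑ i ∈ Finset.range (ℓ + 1), (F ^ (i * δ)) γ}

/-- The basic `F`-sets: set sums of finitely many singletons, `F`-invariant subgroups,
and `F`-cycles. -/
inductive IsFBasic {Γ : Type*} [AddCommGroup Γ] (F : AddMonoid.End Γ) : Set Γ → Prop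
  | singleton (γ : Γ) : IsFBasic F {γ}
  | subgroup (H : AddSubgroup Γ) (hH : ∀ x ∈ H, F x ∈ H) : IsFBasic F ↑H
  | cycle (γ : Γ) (δ : ℕ) (hδ : 0 < δ) : IsFBasic F (FCycle F γ δ)
  | add (S T : Set Γ) : IsFBasic F S → IsFBasic F T → IsFBasic F (S + T)

/-- An `F`-subset of `Γ`: a finite union of basic `F`-sets. -/
def IsFSet {Γ : Type*} [AddCommGroup Γ] (F : AddMonoid.End Γ) (S : Set Γ) : Prop :=
  ∃ (n : ℕ) (U : Fin n → Set Γ), (∀ i, IsFBasic F (U i)) ∧ S = ⋃ i, U i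

lemma sum_block_aux {Γ : Type*} [AddCommGroup Γ] (F : AddMonoid.End Γ) (γ : Γ) (δ a r : ℕ) :
    ∑ i ∈ Finset.range (a + r), (F ^ (i * δ)) γ
      = ∑ i ∈ Finset.range a, (F ^ (i * δ)) γ
        + (F ^ (a * δ)) (∑ t ∈ Finset.range r, (F ^ (t * δ)) γ) := by
  rw [Finset.sum_range_add, map_sum]
  congr 1
  refine Finset.sum_congr rfl fun t _ => ?_
  rw [add_mul, pow_add]
  rfl

lemma sum_key_aux {Γ : Type*} [AddCommGroup Γ] (F : AddMonoid.End Γ) (γ : Γ) (δ r j q : ℕ) :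
    ∑ i ∈ Finset.range (j + 1 + q * r), (F ^ (i * δ)) γ
      = ∑ i ∈ Finset.range (j + 1), (F ^ (i * δ)) γ
        + ∑ k ∈ Finset.range q, (F ^ (k * (r * δ)))
            ((F ^ ((j + 1) * δ)) (∑ t ∈ Finset.range r, (F ^ (t * δ)) γ)) := by
  induction q with
  | zero => simp
  | succ m ih =>
    have h1 : j + 1 + (m + 1) * r = (j + 1 + m * r) + r := by ring
    have hterm : (F ^ ((j + 1 + m * r) * δ)) (∑ t ∈ Finset.range r, (F ^ (t * δ)) γ)
        = (F ^ (m * (r * δ))) ((F ^ ((j + 1) * δ)) (∑ t ∈ Finset.range r, (F ^ (t * δ)) γ)) := by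
      rw [show (j + 1 + m * r) * δ = m * (r * δ) + (j + 1) * δ from by ring, pow_add]
      rfl
    rw [h1, sum_block_aux, ih, hterm, add_assoc, Finset.sum_range_succ _ m]

/-- If `F^δ - 1` is never a zero divisor in the subring of `End(Γ)`
generated by `F`, then every `F`-cycle `C(γ;δ)` is a finite union of translates of
`F`-cycles of the form `C(γ'; rδ)`. -/
theorem fcycle_eq_union_translates_of_pow {Γ : Type*} [AddCommGroup Γ] [AddGroup.FG Γ]
    (F : AddMonoid.End Γ)
    (hF : ∀ δ : ℕ, 0 < δ → ∀ g ∈ Subring.closure ({F} : Set (AddMonoid.End Γ)),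
      ((F ^ δ - 1) * g = 0 → g = 0) ∧ (g * (F ^ δ - 1) = 0 → g = 0))
    (r : ℕ) (hr : 0 < r) (γ : Γ) (δ : ℕ) (hδ : 1 ≤ δ) :
    ∃ (n : ℕ) (β γ' : Fin n → Γ),
      FCycle F γ δ = ⋃ i : Fin n, (fun x => β i + x) '' FCycle F (γ' i) (r * δ) := by
  classical
  refine ⟨2 * r,
    fun i => ∑ t ∈ Finset.range (i.val % r + 1), (F ^ (t * δ)) γ,
    fun i => if i.val < r then 0
      else (F ^ ((i.val % r + 1) * δ)) (∑ t ∈ Finset.range r, (F ^ (t * δ)) γ), ?_⟩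
  ext x
  simp only [Set.mem_iUnion, Set.mem_image, FCycle, Set.mem_setOf_eq]
  constructor
  · rintro ⟨ℓ, rfl⟩
    obtain ⟨j, q, hjr, rfl⟩ : ∃ j q, j < r ∧ ℓ = q * r + j :=
      ⟨ℓ % r, ℓ / r, Nat.mod_lt _ hr, by rw [Nat.mul_comm]; exact (Nat.div_add_mod ℓ r).symm⟩
    rcases q with _ | m
    · refine ⟨⟨j, by omega⟩, 0, ⟨0, by simp [hjr]⟩, ?_⟩
      simp [Nat.mod_eq_of_lt hjr]
    · refine ⟨⟨r + j, by omega⟩, _, ⟨m, rfl⟩, ?_⟩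
      have hmod : (r + j) % r = j := by
        rw [Nat.add_mod_left, Nat.mod_eq_of_lt hjr]
      have hnot : ¬ (r + j < r) := by omega
      simp only [hmod, hnot, if_false]
      rw [show (m + 1) * r + j + 1 = j + 1 + (m + 1) * r from by ring, sum_key_aux]
  · rintro ⟨i, a, ⟨m, rfl⟩, rfl⟩
    by_cases hi : i.val < r
    · refine ⟨i.val % r, ?_⟩
      simp [hi]
    · have hjr : i.val % r < r := Nat.mod_lt _ hr
      refine ⟨i.val % r + (m + 1) * r, ?_⟩
      rw [show i.val % r + (m + 1) * r + 1 = i.val % r + 1 + (m + 1) * r from by omega,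
        sum_key_aux]
      simp [hi]
end

section
/- Let p ≥ 2 be an integer and let F : ℤ → ℤ be multiplication by p. Then: (a) every F-subset of ℤ is p-normal, and (b) every p-normal subset of ℤ has finite symmetric difference with some F-subset of ℤ. In other words, up to finite symmetric differences, the F-subsets of ℤ are exactly the p-normal subsets. -/
open Pointwise

/-- The `F`-cycle `C(γ;δ)` in `ℤ`, where `F` is multiplication by `p`. -/
def ZCycle (p : ℤ) (γ : ℤ) (δ : ℕ) : Set ℤ :=
  {x | ∃ ℓ : ℕ, x = ∑ i ∈ Finset.range (ℓ + 1), p ^ (i * δ) * γ}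

/-- Basic `F`-sets in `ℤ` for `F` multiplication by `p`: set sums of finitely many
singletons, subgroups (all of which are invariant under multiplication by `p`), and
`F`-cycles. -/
inductive IsZFBasic (p : ℤ) : Set ℤ → Prop
  | singleton (γ : ℤ) : IsZFBasic p {γ}
  | subgroup (H : AddSubgroup ℤ) : IsZFBasic p ↑H
  | cycle (γ : ℤ) (δ : ℕ) (hδ : 0 < δ) : IsZFBasic p (ZCycle p γ δ)
  | add (S T : Set ℤ) : IsZFBasic p S → IsZFBasic p T → IsZFBasic p (S + T)

/-- An `F`-subset of `ℤ`, for `F` multiplication by `p`: a finite union of basic sets. -/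
def IsZFSet (p : ℤ) (S : Set ℤ) : Prop :=
  ∃ (n : ℕ) (U : Fin n → Set ℤ), (∀ i, IsZFBasic p (U i)) ∧ S = ⋃ i, U i

/-- An elementary `p`-nested subset of `ℤ`:
`S̃_{p^δ}(c₀; c₁,…,c_d) = {c₀/(p^δ−1) + p^{ℓ₁δ} c₁/(p^δ−1) + ⋯ + p^{ℓ_d δ} c_d/(p^δ−1)}`,
where `(p^δ − 1) ∣ (c₀ + ⋯ + c_d)`.  (We clear denominators, which is equivalent since
`p^δ − 1 ≠ 0` when `p ≥ 2`.) -/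
def IsElemPNested (p : ℤ) (S : Set ℤ) : Prop :=
  ∃ (δ : ℕ), 0 < δ ∧ ∃ (d : ℕ) (c : Fin (d + 1) → ℤ),
    ((p ^ δ - 1) ∣ ∑ i, c i) ∧
    S = {x : ℤ | ∃ ℓ : Fin d → ℕ,
      (p ^ δ - 1) * x = c 0 + ∑ i : Fin d, p ^ (ℓ i * δ) * c i.succ}

/-- A `p`-normal subset of `ℤ`: up to a finite symmetric difference, a finite union of
elementary `p`-nested sets and cosets of subgroups of `ℤ`. -/
def IsPNormal (p : ℤ) (S : Set ℤ) : Prop :=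
  ∃ (n : ℕ) (U : Fin n → Set ℤ),
    (∀ i, IsElemPNested p (U i) ∨ ∃ (a : ℤ) (H : AddSubgroup ℤ), U i = {a} + (H : Set ℤ)) ∧
    (symmDiff S (⋃ i, U i)).Finite


/-!
Writing `q = p^δ`, the elementary nested set `S̃_q(c₀; c₁,…,c_d)` is the set sum
`{s} + G(c₁) + ⋯ + G(c_d)` with `s = (c₀ + ⋯ + c_d)/(q - 1)` and
`G(γ) = {(1 + q + ⋯ + q^{n-1}) γ : n ∈ ℕ}` (`geomSums q γ`). Since `G(γ) = {0} ∪ C(γ;δ)`,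
nested sets are `F`-sets; since `C(γ;δ) = {γ} + G(qγ)`, cycles are nested sets.

It remains to see that finite unions of nested sets and cosets are closed under set sums.
Splitting `n` by its residue modulo `k` writes `G_q(γ)` as a finite union of translates of
sets `G_{q^k}(γ')`, so two nested sets can be brought to a common `δ`, where their sum is again
nested. A nested set plus a nonzero subgroup `H` is the union of the finitely many cosets of
`H` that it meets, and cosets add to cosets.
-/

open Finset

def IsFiniteUnionOf {α : Type*} (P : Set α → Prop) (S : Set α) : Prop :=
  ∃ (n : ℕ) (U : Fin n → Set α), (∀ i, P (U i)) ∧ S = ⋃ i, U i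

namespace IsFiniteUnionOf

variable {α : Type*} {P Q : Set α → Prop} {S T : Set α}

lemma of_prop (h : P S) : IsFiniteUnionOf P S :=
  ⟨1, fun _ => S, fun _ => h, (Set.iUnion_const S).symm⟩

lemma iUnion {ι : Type*} [Finite ι] {f : ι → Set α} (h : ∀ i, IsFiniteUnionOf P (f i)) :
    IsFiniteUnionOf P (⋃ i, f i) := by
  choose n U hU hf using h
  obtain ⟨m, ⟨e⟩⟩ := Finite.exists_equiv_fin ((i : ι) × Fin (n i))
  refine ⟨m, fun k => U (e.symm k).1 (e.symm k).2, fun k => hU _ _, ?_⟩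
  rw [Set.iUnion_congr hf]
  let V : (i : ι) × Fin (n i) → Set α := fun x => U x.1 x.2
  exact (Set.iUnion_sigma V).symm.trans (e.symm.iSup_comp (g := V)).symm

lemma union (hS : P S) (hT : P T) : IsFiniteUnionOf P (S ∪ T) := by
  rw [Set.union_eq_iUnion]
  exact iUnion fun b => by cases b <;> exact of_prop ‹_›

lemma trans (hPQ : ∀ U, P U → IsFiniteUnionOf Q U) (h : IsFiniteUnionOf P S) :
    IsFiniteUnionOf Q S := by
  obtain ⟨n, U, hU, rfl⟩ := h
  exact iUnion fun i => hPQ _ (hU i)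

lemma add [Add α] (hS : IsFiniteUnionOf P S) (hT : IsFiniteUnionOf P T)
    (hPQ : ∀ U V, P U → P V → IsFiniteUnionOf Q (U + V)) : IsFiniteUnionOf Q (S + T) := by
  obtain ⟨n, U, hU, rfl⟩ := hS
  obtain ⟨m, V, hV, rfl⟩ := hT
  simp_rw [Set.iUnion_add, Set.add_iUnion]
  exact iUnion fun i => iUnion fun j => hPQ _ _ (hU i) (hV j)

end IsFiniteUnionOf

lemma AddSubgroup.isFiniteUnionOf_add_coe {G : Type*} [AddGroup G] (H : AddSubgroup G)
    [H.FiniteIndex] (S : Set G) :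
    IsFiniteUnionOf (fun T => ∃ a, T = {a} + (H : Set G)) (S + (H : Set G)) := by
  rw [← QuotientAddGroup.preimage_image_mk_eq_add, ← Set.biUnion_preimage_singleton,
    Set.biUnion_eq_iUnion]
  refine IsFiniteUnionOf.iUnion fun q => IsFiniteUnionOf.of_prop ⟨q.1.out, ?_⟩
  rw [Set.singleton_add]
  change _ = (q.1.out +ᵥ ·) '' (H : Set G)
  rw [Set.image_vadd, ← QuotientAddGroup.eq_class_eq_leftCoset, QuotientAddGroup.out_eq']
  rfl

lemma Int.finiteIndex_of_ne_bot {H : AddSubgroup ℤ} (hH : H ≠ ⊥) : H.FiniteIndex := by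
  obtain ⟨a, rfl⟩ := Int.subgroup_cyclic H
  rw [← AddSubgroup.zmultiples_eq_closure] at hH ⊢
  rw [AddSubgroup.finiteIndex_iff, Int.index_zmultiples, Int.natAbs_ne_zero]
  rintro rfl
  exact hH AddSubgroup.zmultiples_zero_eq_bot

section NestedSets

variable {R : Type*} [CommSemiring R]

def geomSums (q γ : R) : Set R :=
  Set.range fun n : ℕ => (∑ j ∈ range n, q ^ j) * γ

lemma geom_sum_range_mul (q : R) (k t : ℕ) :
    ∑ j ∈ range (k * t), q ^ j = (∑ u ∈ range t, (q ^ k) ^ u) * ∑ j ∈ range k, q ^ j := by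
  induction t with
  | zero => simp
  | succ t ih =>
    rw [Nat.mul_succ, sum_range_add, ih, sum_range_succ, add_mul, ← pow_mul]
    simp_rw [pow_add, ← mul_sum]

lemma geom_sum_add_mul (q : R) (r k t : ℕ) :
    ∑ j ∈ range (r + k * t), q ^ j
      = ∑ j ∈ range r, q ^ j + q ^ r * ((∑ u ∈ range t, (q ^ k) ^ u) * ∑ j ∈ range k, q ^ j) := by
  rw [sum_range_add, ← geom_sum_range_mul, mul_sum]
  simp_rw [pow_add]

lemma geomSums_eq_iUnion (q γ : R) {k : ℕ} (hk : 0 < k) :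
    geomSums q γ = ⋃ r : Fin k, {(∑ j ∈ range r, q ^ j) * γ}
      + geomSums (q ^ k) (q ^ (r : ℕ) * (∑ j ∈ range k, q ^ j) * γ) := by
  ext x
  simp only [geomSums, Set.mem_iUnion, Set.singleton_add, ← Set.range_comp, Function.comp_def,
    Set.mem_range]
  constructor
  · rintro ⟨n, rfl⟩
    refine ⟨⟨n % k, Nat.mod_lt n hk⟩, n / k, ?_⟩
    rw [← Nat.mod_add_div n k, geom_sum_add_mul, Nat.mod_add_div]
    ring
  · rintro ⟨r, t, rfl⟩
    exact ⟨r + k * t, by rw [geom_sum_add_mul]; ring⟩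

def nestedSets (q : R) : AddSubmonoid (Set R) :=
  AddSubmonoid.closure (Set.range (fun a : R => ({a} : Set R)) ∪ Set.range (geomSums q))

lemma singleton_mem_nestedSets (q a : R) : {a} ∈ nestedSets q :=
  AddSubmonoid.subset_closure (Or.inl ⟨a, rfl⟩)

lemma geomSums_mem_nestedSets (q γ : R) : geomSums q γ ∈ nestedSets q :=
  AddSubmonoid.subset_closure (Or.inr ⟨γ, rfl⟩)

lemma isFiniteUnionOf_nestedSets_pow {q : R} {k : ℕ} (hk : 0 < k) {S : Set R}
    (hS : S ∈ nestedSets q) : IsFiniteUnionOf (· ∈ nestedSets (q ^ k)) S := by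
  induction hS using AddSubmonoid.closure_induction with
  | mem S hS =>
    rcases hS with ⟨a, rfl⟩ | ⟨γ, rfl⟩
    · exact .of_prop (singleton_mem_nestedSets _ a)
    · rw [geomSums_eq_iUnion q γ hk]
      exact .iUnion fun r => .of_prop
        (add_mem (singleton_mem_nestedSets _ _) (geomSums_mem_nestedSets _ _))
  | zero => exact .of_prop (zero_mem _)
  | add S T _ _ hS hT => exact hS.add hT fun _ _ hU hV => .of_prop (add_mem hU hV)

lemma isFiniteUnionOf_nestedSets_pow_of_dvd {q : R} {δ L : ℕ} (hL : 0 < L) (hδL : δ ∣ L)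
    {S : Set R} (hS : S ∈ nestedSets (q ^ δ)) : IsFiniteUnionOf (· ∈ nestedSets (q ^ L)) S := by
  obtain ⟨k, rfl⟩ := hδL
  rw [pow_mul]
  exact isFiniteUnionOf_nestedSets_pow (Nat.pos_of_mul_pos_left hL) hS

lemma mem_nestedSets_iff {q : R} {S : Set R} :
    S ∈ nestedSets q ↔ ∃ (s : R) (d : ℕ) (γ : Fin d → R), S = {s} + ∑ i, geomSums q (γ i) := by
  constructor
  · intro hS
    induction hS using AddSubmonoid.closure_induction with
    | mem S hS =>
      rcases hS with ⟨a, rfl⟩ | ⟨γ, rfl⟩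
      · exact ⟨a, 0, Fin.elim0, by simp⟩
      · exact ⟨0, 1, ![γ], by simp [Set.singleton_zero]⟩
    | zero => exact ⟨0, 0, Fin.elim0, by simp [Set.singleton_zero]⟩
    | add S T _ _ hS hT =>
      obtain ⟨s, d, γ, rfl⟩ := hS
      obtain ⟨t, e, γ', rfl⟩ := hT
      refine ⟨s + t, d + e, Fin.append γ γ', ?_⟩
      rw [Fin.sum_univ_add, ← Set.singleton_add_singleton]
      simp only [Fin.append_left, Fin.append_right]
      abel
  · rintro ⟨s, d, γ, rfl⟩
    exact add_mem (singleton_mem_nestedSets q s)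
      (sum_mem fun i _ => geomSums_mem_nestedSets q (γ i))

lemma mem_singleton_add_sum_geomSums {q s x : R} {d : ℕ} (γ : Fin d → R) :
    x ∈ {s} + ∑ i, geomSums q (γ i)
      ↔ ∃ ℓ : Fin d → ℕ, x = s + ∑ i, (∑ j ∈ range (ℓ i), q ^ j) * γ i := by
  rw [Set.singleton_add, Set.mem_image]
  simp_rw [Set.mem_fintype_sum, geomSums, Set.mem_range]
  constructor
  · rintro ⟨y, ⟨g, hg, rfl⟩, rfl⟩
    choose ℓ hℓ using hg
    exact ⟨ℓ, by simp only [hℓ]⟩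
  · rintro ⟨ℓ, rfl⟩
    exact ⟨_, ⟨_, fun i => ⟨ℓ i, rfl⟩, rfl⟩, rfl⟩

end NestedSets

lemma setOf_sub_one_mul_eq_singleton_add_sum_geomSums {R : Type*} [CommRing R] [IsDomain R]
    {q s : R} (hq : q ≠ 1) {d : ℕ} (c : Fin (d + 1) → R) (hs : ∑ i, c i = (q - 1) * s) :
    {x | ∃ ℓ : Fin d → ℕ, (q - 1) * x = c 0 + ∑ i, q ^ ℓ i * c i.succ}
      = {s} + ∑ i : Fin d, geomSums q (c i.succ) := by
  have key : ∀ ℓ : Fin d → ℕ, (q - 1) * (s + ∑ i, (∑ j ∈ range (ℓ i), q ^ j) * c i.succ)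
      = c 0 + ∑ i, q ^ ℓ i * c i.succ := by
    intro ℓ
    rw [mul_add, ← hs, Fin.sum_univ_succ, mul_sum, add_assoc, ← sum_add_distrib]
    congr 1
    refine sum_congr rfl fun i _ => ?_
    rw [← mul_assoc, mul_comm (q - 1), geom_sum_mul]
    ring
  ext x
  rw [mem_singleton_add_sum_geomSums, Set.mem_ofPred_eq]
  refine exists_congr fun ℓ => ?_
  rw [← key, mul_right_inj' (sub_ne_zero.mpr hq)]

section PNormal

variable {p : ℤ} {S T : Set ℤ}

lemma isElemPNested_iff (hp : 2 ≤ p) :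
    IsElemPNested p S ↔ ∃ δ, 0 < δ ∧ S ∈ nestedSets (p ^ δ) := by
  simp only [IsElemPNested, pow_mul']
  refine exists_congr fun δ => and_congr_right fun hδ => ?_
  have hq : p ^ δ ≠ 1 := (one_lt_pow₀ (by linarith) hδ.ne').ne'
  rw [mem_nestedSets_iff]
  constructor
  · rintro ⟨d, c, ⟨s, hs⟩, rfl⟩
    exact ⟨s, d, fun i : Fin d => c i.succ,
      setOf_sub_one_mul_eq_singleton_add_sum_geomSums hq c hs⟩
  · rintro ⟨s, d, γ, rfl⟩
    set c : Fin (d + 1) → ℤ := Fin.cons ((p ^ δ - 1) * s - ∑ i, γ i) γ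
    have hs : ∑ i, c i = (p ^ δ - 1) * s := by simp [c, Fin.sum_univ_succ]
    refine ⟨d, c, ⟨s, hs⟩, ?_⟩
    rw [setOf_sub_one_mul_eq_singleton_add_sum_geomSums hq c hs]
    simp only [c, Fin.cons_succ]

lemma zCycle_eq_range (p γ : ℤ) (δ : ℕ) :
    ZCycle p γ δ = Set.range fun ℓ : ℕ => (∑ i ∈ range (ℓ + 1), (p ^ δ) ^ i) * γ := by
  ext x
  simp [ZCycle, sum_mul, pow_mul', eq_comm]

lemma zCycle_eq_singleton_add_geomSums (p γ : ℤ) (δ : ℕ) :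
    ZCycle p γ δ = {γ} + geomSums (p ^ δ) (p ^ δ * γ) := by
  ext x
  simp only [zCycle_eq_range, geomSums, Set.singleton_add, ← Set.range_comp, Function.comp_def,
    Set.mem_range, geom_sum_succ]
  refine exists_congr fun ℓ => ?_
  ring_nf

lemma insert_zero_zCycle (p γ : ℤ) (δ : ℕ) :
    insert 0 (ZCycle p γ δ) = geomSums (p ^ δ) γ := by
  ext x
  simp only [zCycle_eq_range, geomSums, Set.mem_insert_iff, Set.mem_range]
  constructor
  · rintro (rfl | ⟨ℓ, rfl⟩)
    · exact ⟨0, by simp⟩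
    · exact ⟨ℓ + 1, rfl⟩
  · rintro ⟨_ | ℓ, rfl⟩
    · simp
    · exact Or.inr ⟨ℓ, rfl⟩

def IsPiece (p : ℤ) (S : Set ℤ) : Prop :=
  IsElemPNested p S ∨ ∃ (a : ℤ) (H : AddSubgroup ℤ), S = {a} + (H : Set ℤ)

lemma isPNormal_iff :
    IsPNormal p S ↔ ∃ T, IsFiniteUnionOf (IsPiece p) T ∧ (symmDiff S T).Finite :=
  ⟨fun ⟨n, U, hU, h⟩ => ⟨_, ⟨n, U, hU, rfl⟩, h⟩, fun ⟨_, ⟨n, U, hU, rfl⟩, h⟩ => ⟨n, U, hU, h⟩⟩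

lemma IsElemPNested.add_singleton (hp : 2 ≤ p) (hS : IsElemPNested p S) (a : ℤ) :
    IsElemPNested p (S + {a}) := by
  obtain ⟨δ, hδ, hS⟩ := (isElemPNested_iff hp).1 hS
  exact (isElemPNested_iff hp).2 ⟨δ, hδ, add_mem hS (singleton_mem_nestedSets _ a)⟩

lemma IsElemPNested.add (hp : 2 ≤ p) (hS : IsElemPNested p S) (hT : IsElemPNested p T) :
    IsFiniteUnionOf (IsElemPNested p) (S + T) := by
  obtain ⟨δ₁, hδ₁, hS⟩ := (isElemPNested_iff hp).1 hS
  obtain ⟨δ₂, hδ₂, hT⟩ := (isElemPNested_iff hp).1 hT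
  have hL : 0 < δ₁.lcm δ₂ := Nat.lcm_pos hδ₁ hδ₂
  have hS' := isFiniteUnionOf_nestedSets_pow_of_dvd hL (Nat.dvd_lcm_left δ₁ δ₂) hS
  have hT' := isFiniteUnionOf_nestedSets_pow_of_dvd hL (Nat.dvd_lcm_right δ₁ δ₂) hT
  refine (hS'.add hT' fun _ _ hU hV => .of_prop (add_mem hU hV)).trans fun U hU => ?_
  exact .of_prop ((isElemPNested_iff hp).2 ⟨_, hL, hU⟩)

lemma IsElemPNested.add_coset (hp : 2 ≤ p) (hS : IsElemPNested p S) (a : ℤ)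
    (H : AddSubgroup ℤ) : IsFiniteUnionOf (IsPiece p) (S + ({a} + (H : Set ℤ))) := by
  rw [← add_assoc]
  by_cases hH : H = ⊥
  · subst hH
    rw [AddSubgroup.coe_bot, Set.singleton_zero, add_zero]
    exact .of_prop (Or.inl (hS.add_singleton hp a))
  · have := Int.finiteIndex_of_ne_bot hH
    exact (H.isFiniteUnionOf_add_coe _).trans fun U ⟨b, hU⟩ => .of_prop (Or.inr ⟨b, H, hU⟩)

lemma singleton_add_coe_add_singleton_add_coe {G : Type*} [AddCommGroup G] (a b : G)
    (H K : AddSubgroup G) :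
    ({a} + (H : Set G)) + ({b} + (K : Set G))
      = {a + b} + ((H ⊔ K : AddSubgroup G) : Set G) := by
  rw [AddSubgroup.normal_add, ← Set.singleton_add_singleton]
  abel

lemma IsPiece.add (hp : 2 ≤ p) (hS : IsPiece p S) (hT : IsPiece p T) :
    IsFiniteUnionOf (IsPiece p) (S + T) := by
  rcases hS with hS | ⟨a, H, rfl⟩ <;> rcases hT with hT | ⟨b, K, rfl⟩
  · exact (hS.add hp hT).trans fun U hU => .of_prop (Or.inl hU)
  · exact hS.add_coset hp b K
  · rw [add_comm]
    exact hT.add_coset hp a H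
  · rw [singleton_add_coe_add_singleton_add_coe]
    exact .of_prop (Or.inr ⟨_, _, rfl⟩)

lemma IsZFBasic.isFiniteUnionOf_isPiece (hp : 2 ≤ p) (h : IsZFBasic p S) :
    IsFiniteUnionOf (IsPiece p) S := by
  induction h with
  | singleton γ => exact .of_prop (Or.inr ⟨γ, ⊥, by simp [Set.singleton_zero]⟩)
  | subgroup H => exact .of_prop (Or.inr ⟨0, H, by simp [Set.singleton_zero]⟩)
  | cycle γ δ hδ =>
    refine .of_prop (Or.inl ((isElemPNested_iff hp).2 ⟨δ, hδ, ?_⟩))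
    rw [zCycle_eq_singleton_add_geomSums]
    exact add_mem (singleton_mem_nestedSets _ γ) (geomSums_mem_nestedSets _ _)
  | add S T _ _ hS hT => exact hS.add hT fun _ _ => IsPiece.add hp

lemma isZFSet_iff : IsZFSet p S ↔ IsFiniteUnionOf (IsZFBasic p) S := Iff.rfl

def zfSets (p : ℤ) : AddSubmonoid (Set ℤ) where
  carrier := {S | IsZFSet p S}
  zero_mem' := IsFiniteUnionOf.of_prop (IsZFBasic.singleton 0)
  add_mem' hS hT := IsFiniteUnionOf.add hS hT fun U V hU hV => .of_prop (.add U V hU hV)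

lemma nestedSets_le_zfSets (p : ℤ) {δ : ℕ} (hδ : 0 < δ) : nestedSets (p ^ δ) ≤ zfSets p := by
  rw [nestedSets, AddSubmonoid.closure_le]
  rintro _ (⟨a, rfl⟩ | ⟨γ, rfl⟩)
  · exact IsFiniteUnionOf.of_prop (IsZFBasic.singleton a)
  · rw [← insert_zero_zCycle, Set.insert_eq]
    exact IsFiniteUnionOf.union (.singleton 0) (.cycle γ δ hδ)

lemma IsPiece.isZFSet (hp : 2 ≤ p) (h : IsPiece p S) : IsZFSet p S := by
  rcases h with h | ⟨a, H, rfl⟩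
  · obtain ⟨δ, hδ, hS⟩ := (isElemPNested_iff hp).1 h
    exact nestedSets_le_zfSets p hδ hS
  · exact IsFiniteUnionOf.of_prop (.add _ _ (.singleton a) (.subgroup H))

end PNormal

/-- For `F : ℤ → ℤ` multiplication by `p ≥ 2`: (a) every `F`-subset of
`ℤ` is `p`-normal, and (b) every `p`-normal subset of `ℤ` has finite symmetric
difference with some `F`-subset of `ℤ`. -/
theorem zfset_iff_pnormal (p : ℤ) (hp : 2 ≤ p) :
    (∀ S : Set ℤ, IsZFSet p S → IsPNormal p S) ∧
    (∀ S : Set ℤ, IsPNormal p S → ∃ T : Set ℤ, IsZFSet p T ∧ (symmDiff S T).Finite) := by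
  refine ⟨fun S hS => ?_, fun S hS => ?_⟩
  · refine isPNormal_iff.2 ⟨S, ?_, by simp⟩
    exact (isZFSet_iff.1 hS).trans fun U hU => hU.isFiniteUnionOf_isPiece hp
  · obtain ⟨T, hT, hST⟩ := isPNormal_iff.1 hS
    exact ⟨T, hT.trans fun U hU => hU.isZFSet hp, hST⟩
end

section
/- Let Σ be an F-spanning set for Γ. Given any three words w_1, w_2, w_3 over Σ all of the same length m, there is a word u over Σ of length m + 1 such that [w_1]_F + [w_2]_F + [w_3]_F = [u]_F. -/
open Pointwise

theorem aux_carry {Γ : Type*} [AddCommGroup Γ]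
    (F : AddMonoid.End Γ) (Sig : Set Γ) (hSig : IsSpanningSet F Sig) :
    ∀ (m : ℕ) (w₁ w₂ w₃ : List Γ),
      (∀ x ∈ w₁, x ∈ Sig) → (∀ x ∈ w₂, x ∈ Sig) → (∀ x ∈ w₃, x ∈ Sig) →
      w₁.length = m → w₂.length = m → w₃.length = m →
      ∀ c ∈ Sig, ∃ u : List Γ, (∀ x ∈ u, x ∈ Sig) ∧ u.length = m + 1 ∧
        wordVal F u = wordVal F w₁ + wordVal F w₂ + wordVal F w₃ + c := by
  obtain ⟨-, h0, -, -, -, hfive, -⟩ := hSig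
  intro m
  induction m with
  | zero =>
    intro w₁ w₂ w₃ _ _ _ l₁ l₂ l₃ c hc
    rw [List.length_eq_zero_iff] at l₁ l₂ l₃
    subst l₁; subst l₂; subst l₃
    exact ⟨[c], by simpa using hc, rfl, by simp [wordVal]⟩
  | succ n ih =>
    intro w₁ w₂ w₃ h₁ h₂ h₃ l₁ l₂ l₃ c hc
    match w₁, w₂, w₃ with
    | x₁ :: v₁, x₂ :: v₂, x₃ :: v₃ =>
      simp only [List.length_cons, Nat.succ.injEq] at l₁ l₂ l₃
      have hx₁ := h₁ x₁ (by simp)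
      have hx₂ := h₂ x₂ (by simp)
      have hx₃ := h₃ x₃ (by simp)
      obtain ⟨t, ht, t', ht', heq⟩ := hfive x₁ hx₁ x₂ hx₂ x₃ hx₃ c hc 0 h0
      obtain ⟨u', hu'S, hu'l, hu'v⟩ := ih v₁ v₂ v₃
        (fun x hx => h₁ x (by simp [hx])) (fun x hx => h₂ x (by simp [hx]))
        (fun x hx => h₃ x (by simp [hx])) l₁ l₂ l₃ t' ht'
      refine ⟨t :: u', ?_, by simp [hu'l], ?_⟩
      · intro x hx
        rcases List.mem_cons.mp hx with h | h
        · exact h ▸ ht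
        · exact hu'S x h
      · simp only [wordVal, hu'v, map_add]
        rw [add_zero] at heq
        linear_combination (norm := abel) -heq

/-- **carrying.** Given three words over an `F`-spanning set `Σ`, all of
length `m`, their base-`F` values sum to the base-`F` value of a word of length `m+1`. -/
theorem sum_three_words_eq_word_succ_length {Γ : Type*} [AddCommGroup Γ]
    (F : AddMonoid.End Γ) (Sig : Set Γ) (hSig : IsSpanningSet F Sig) (m : ℕ)
    (w₁ w₂ w₃ : List Γ)
    (hw₁ : ∀ x ∈ w₁, x ∈ Sig) (hw₂ : ∀ x ∈ w₂, x ∈ Sig) (hw₃ : ∀ x ∈ w₃, x ∈ Sig)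
    (hl₁ : w₁.length = m) (hl₂ : w₂.length = m) (hl₃ : w₃.length = m) :
    ∃ u : List Γ, (∀ x ∈ u, x ∈ Sig) ∧ u.length = m + 1 ∧
      wordVal F u = wordVal F w₁ + wordVal F w₂ + wordVal F w₃ := by
  obtain ⟨u, hS, hl, hv⟩ := aux_carry F Sig hSig m w₁ w₂ w₃ hw₁ hw₂ hw₃ hl₁ hl₂ hl₃ 0
    hSig.2.1
  exact ⟨u, hS, hl, by rw [hv, add_zero]⟩
end

section
/- Let Σ be an F-spanning set for Γ. Given any three words w_1, w_2, w_3 over Σ all of the same length m such that [w_1]_F + [w_2]_F + [w_3]_F ∈ F(Γ), there is a word u over Σ of length m such that [w_1]_F + [w_2]_F + [w_3]_F = F([u]_F). -/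
open Pointwise

/-!
Add the three words digit by digit, as in schoolbook addition in base `F`. The leading digits
sum to an element of `F(Γ)`, so by axiom (v) they equal `F t` with `t ∈ Σ`, and `t` is carried
into the remaining digits. There, at each position, the carry and the three digits (padded with
`0` to five summands) are rewritten by axiom (iv) as `s + F s'`: `s` becomes the output digit and
`s'` the next carry. Since the carry is a single letter, the result has just one more letter
than the remaining words, i.e. exactly `m` letters.
-/

section

variable {Γ : Type*} [AddCommGroup Γ] {F : AddMonoid.End Γ}

lemma wordVal_cons_add_three (x₁ x₂ x₃ : Γ) (v₁ v₂ v₃ : List Γ) :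
    wordVal F (x₁ :: v₁) + wordVal F (x₂ :: v₂) + wordVal F (x₃ :: v₃) =
      x₁ + x₂ + x₃ + F (wordVal F v₁ + wordVal F v₂ + wordVal F v₃) := by
  simp only [wordVal, map_add]
  abel

namespace IsSpanningSet

variable {Sig : Set Γ}

lemma zero_mem (hSig : IsSpanningSet F Sig) : (0 : Γ) ∈ Sig :=
  hSig.2.1

lemma exists_add_five_eq (hSig : IsSpanningSet F Sig) {x₁ x₂ x₃ x₄ x₅ : Γ}
    (hx₁ : x₁ ∈ Sig) (hx₂ : x₂ ∈ Sig) (hx₃ : x₃ ∈ Sig) (hx₄ : x₄ ∈ Sig) (hx₅ : x₅ ∈ Sig) :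
    ∃ t ∈ Sig, ∃ t' ∈ Sig, x₁ + x₂ + x₃ + x₄ + x₅ = t + F t' :=
  hSig.2.2.2.2.2.1 x₁ hx₁ x₂ hx₂ x₃ hx₃ x₄ hx₄ x₅ hx₅

lemma exists_add_three_eq_apply (hSig : IsSpanningSet F Sig) {x₁ x₂ x₃ y : Γ}
    (hx₁ : x₁ ∈ Sig) (hx₂ : x₂ ∈ Sig) (hx₃ : x₃ ∈ Sig) (hy : x₁ + x₂ + x₃ = F y) :
    ∃ t ∈ Sig, x₁ + x₂ + x₃ = F t :=
  hSig.2.2.2.2.2.2 x₁ hx₁ x₂ hx₂ x₃ hx₃ ⟨y, hy⟩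

lemma exists_word_eq_add_three (hSig : IsSpanningSet F Sig) {n : ℕ} {t : Γ} (ht : t ∈ Sig)
    {w₁ w₂ w₃ : List Γ}
    (hw₁ : ∀ x ∈ w₁, x ∈ Sig) (hw₂ : ∀ x ∈ w₂, x ∈ Sig) (hw₃ : ∀ x ∈ w₃, x ∈ Sig)
    (hl₁ : w₁.length = n) (hl₂ : w₂.length = n) (hl₃ : w₃.length = n) :
    ∃ u : List Γ, (∀ x ∈ u, x ∈ Sig) ∧ u.length = n + 1 ∧
      wordVal F u = t + (wordVal F w₁ + wordVal F w₂ + wordVal F w₃) := by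
  induction n generalizing t w₁ w₂ w₃ with
  | zero =>
    obtain rfl := List.length_eq_zero_iff.1 hl₁
    obtain rfl := List.length_eq_zero_iff.1 hl₂
    obtain rfl := List.length_eq_zero_iff.1 hl₃
    exact ⟨[t], by simpa using ht, rfl, by simp [wordVal]⟩
  | succ n ih =>
    obtain ⟨x₁, v₁, rfl⟩ := List.exists_cons_of_length_eq_add_one hl₁
    obtain ⟨x₂, v₂, rfl⟩ := List.exists_cons_of_length_eq_add_one hl₂
    obtain ⟨x₃, v₃, rfl⟩ := List.exists_cons_of_length_eq_add_one hl₃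
    rw [List.forall_mem_cons] at hw₁ hw₂ hw₃
    obtain ⟨s, hs, carry, hcarry, hdigit⟩ :=
      hSig.exists_add_five_eq ht hw₁.1 hw₂.1 hw₃.1 hSig.zero_mem
    obtain ⟨u, hu, hul, hval⟩ := ih hcarry hw₁.2 hw₂.2 hw₃.2
      (Nat.succ.inj hl₁) (Nat.succ.inj hl₂) (Nat.succ.inj hl₃)
    refine ⟨s :: u, List.forall_mem_cons.2 ⟨hs, hu⟩, by simp [hul], ?_⟩
    rw [wordVal_cons_add_three, wordVal, hval, map_add]
    linear_combination (norm := abel) -hdigit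

end IsSpanningSet

end

/-- Given three words over an `F`-spanning set `Σ`, all of length `m`,
whose base-`F` values sum to an element of `F(Γ)`, the sum equals `F([u]_F)` for some
word `u` of length `m`. -/
theorem sum_three_words_in_image_eq_F_word {Γ : Type*} [AddCommGroup Γ]
    (F : AddMonoid.End Γ) (Sig : Set Γ) (hSig : IsSpanningSet F Sig) (m : ℕ)
    (w₁ w₂ w₃ : List Γ)
    (hw₁ : ∀ x ∈ w₁, x ∈ Sig) (hw₂ : ∀ x ∈ w₂, x ∈ Sig) (hw₃ : ∀ x ∈ w₃, x ∈ Sig)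
    (hl₁ : w₁.length = m) (hl₂ : w₂.length = m) (hl₃ : w₃.length = m)
    (hmem : ∃ y : Γ, wordVal F w₁ + wordVal F w₂ + wordVal F w₃ = F y) :
    ∃ u : List Γ, (∀ x ∈ u, x ∈ Sig) ∧ u.length = m ∧
      wordVal F w₁ + wordVal F w₂ + wordVal F w₃ = F (wordVal F u) := by
  cases m with
  | zero =>
    obtain rfl := List.length_eq_zero_iff.1 hl₁
    obtain rfl := List.length_eq_zero_iff.1 hl₂
    obtain rfl := List.length_eq_zero_iff.1 hl₃
    exact ⟨[], by simp, rfl, by simp [wordVal]⟩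
  | succ n =>
    obtain ⟨x₁, v₁, rfl⟩ := List.exists_cons_of_length_eq_add_one hl₁
    obtain ⟨x₂, v₂, rfl⟩ := List.exists_cons_of_length_eq_add_one hl₂
    obtain ⟨x₃, v₃, rfl⟩ := List.exists_cons_of_length_eq_add_one hl₃
    rw [List.forall_mem_cons] at hw₁ hw₂ hw₃
    rw [wordVal_cons_add_three] at hmem ⊢
    obtain ⟨y, hy⟩ := hmem
    have hlead : x₁ + x₂ + x₃ = F (y - (wordVal F v₁ + wordVal F v₂ + wordVal F v₃)) := by
      rw [map_sub, ← hy, add_sub_cancel_right]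
    obtain ⟨t, ht, hcarry⟩ := hSig.exists_add_three_eq_apply hw₁.1 hw₂.1 hw₃.1 hlead
    obtain ⟨u, hu, hul, hval⟩ := hSig.exists_word_eq_add_three ht hw₁.2 hw₂.2 hw₃.2
      (Nat.succ.inj hl₁) (Nat.succ.inj hl₂) (Nat.succ.inj hl₃)
    exact ⟨u, hu, hul, by rw [hval, hcarry, ← map_add]⟩
end

section
/- Let Σ be an F-spanning set for Γ and fix an integer m > 0. Define Σ^(m) := {[w]_F : w a word over Σ of length m}. Then Σ^(m) is an F-spanning set for Γ. -/
open Pointwise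

/-- `Σ^(m)`: the set of base-`F` values of words of length `m` over `Σ`. -/
def sigmaPow {Γ : Type*} [AddCommGroup Γ] (F : AddMonoid.End Γ) (Sig : Set Γ)
    (m : ℕ) : Set Γ :=
  {x : Γ | ∃ w : List Γ, (∀ y ∈ w, y ∈ Sig) ∧ w.length = m ∧ wordVal F w = x}

section Aux
set_option linter.unusedSectionVars false
variable {Γ : Type*} [AddCommGroup Γ] (F : AddMonoid.End Γ) {Sig : Set Γ}

lemma wordVal_replicate_zero (n : ℕ) : wordVal F (List.replicate n (0:Γ)) = 0 := by
  induction n with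
  | zero => rfl
  | succ n ih => simp [List.replicate, wordVal, ih]

lemma wordVal_map_neg (w : List Γ) :
    wordVal F (w.map (fun y => -y)) = - wordVal F w := by
  induction w with
  | nil => simp [wordVal]
  | cons a t ih => simp [wordVal, ih]; abel

lemma cons_of_len {w : List Γ} {n : ℕ} (h : w.length = n + 1) :
    ∃ a t, w = a :: t ∧ t.length = n := by
  cases w with
  | nil => simp at h
  | cons a t => exact ⟨a, t, rfl, by simpa using h⟩

lemma mem_sigmaPow_of_mem (h0 : (0:Γ) ∈ Sig) {s : Γ} (hs : s ∈ Sig) {m : ℕ}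
    (hm : 0 < m) : s ∈ sigmaPow F Sig m := by
  refine ⟨s :: List.replicate (m - 1) 0, ?_, ?_, ?_⟩
  · intro y hy
    rcases List.mem_cons.1 hy with h | h
    · exact h ▸ hs
    · rwa [List.eq_of_mem_replicate h]
  · simp; omega
  · simp [wordVal, wordVal_replicate_zero]

lemma sum5 (h5 : ∀ x₁ ∈ Sig, ∀ x₂ ∈ Sig, ∀ x₃ ∈ Sig, ∀ x₄ ∈ Sig, ∀ x₅ ∈ Sig,
      ∃ t ∈ Sig, ∃ t' ∈ Sig, x₁ + x₂ + x₃ + x₄ + x₅ = t + F t') :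
    ∀ (n : ℕ) (w₁ w₂ w₃ w₄ w₅ : List Γ),
      (∀ y ∈ w₁, y ∈ Sig) → (∀ y ∈ w₂, y ∈ Sig) → (∀ y ∈ w₃, y ∈ Sig) →
      (∀ y ∈ w₄, y ∈ Sig) → (∀ y ∈ w₅, y ∈ Sig) →
      w₁.length = n → w₂.length = n → w₃.length = n → w₄.length = n → w₅.length = n →
      ∃ t t' : List Γ, (∀ y ∈ t, y ∈ Sig) ∧ (∀ y ∈ t', y ∈ Sig) ∧
        t.length = n ∧ t'.length = n ∧
        wordVal F w₁ + wordVal F w₂ + wordVal F w₃ + wordVal F w₄ + wordVal F w₅ =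
          wordVal F t + F (wordVal F t') := by
  intro n
  induction n with
  | zero =>
    intro w₁ w₂ w₃ w₄ w₅ _ _ _ _ _ l₁ l₂ l₃ l₄ l₅
    rw [List.length_eq_zero_iff] at l₁ l₂ l₃ l₄ l₅
    subst l₁; subst l₂; subst l₃; subst l₄; subst l₅
    exact ⟨[], [], by simp, by simp, rfl, rfl, by simp [wordVal]⟩
  | succ n ih =>
    intro w₁ w₂ w₃ w₄ w₅ e₁ e₂ e₃ e₄ e₅ l₁ l₂ l₃ l₄ l₅
    obtain ⟨a₁, u₁, rfl, m₁⟩ := cons_of_len l₁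
    obtain ⟨a₂, u₂, rfl, m₂⟩ := cons_of_len l₂
    obtain ⟨a₃, u₃, rfl, m₃⟩ := cons_of_len l₃
    obtain ⟨a₄, u₄, rfl, m₄⟩ := cons_of_len l₄
    obtain ⟨a₅, u₅, rfl, m₅⟩ := cons_of_len l₅
    obtain ⟨s, hs, s', hs', hhead⟩ :=
      h5 a₁ (e₁ _ (by simp)) a₂ (e₂ _ (by simp)) a₃ (e₃ _ (by simp))
        a₄ (e₄ _ (by simp)) a₅ (e₅ _ (by simp))
    obtain ⟨t, t', ht, ht', lt, lt', hsum⟩ :=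
      ih u₁ u₂ u₃ u₄ u₅ (fun y hy => e₁ y (by simp [hy])) (fun y hy => e₂ y (by simp [hy]))
        (fun y hy => e₃ y (by simp [hy])) (fun y hy => e₄ y (by simp [hy]))
        (fun y hy => e₅ y (by simp [hy])) m₁ m₂ m₃ m₄ m₅
    refine ⟨s :: t, s' :: t', ?_, ?_, by simp [lt], by simp [lt'], ?_⟩
    · intro y hy; rcases List.mem_cons.1 hy with h | h
      · exact h ▸ hs
      · exact ht y h
    · intro y hy; rcases List.mem_cons.1 hy with h | h
      · exact h ▸ hs'
      · exact ht' y h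
    · simp only [wordVal]
      have h1 : F (wordVal F u₁) + F (wordVal F u₂) + F (wordVal F u₃) +
          F (wordVal F u₄) + F (wordVal F u₅) = F (wordVal F t) + F (F (wordVal F t')) := by
        rw [← map_add, ← map_add, ← map_add, ← map_add, hsum, map_add]
      calc a₁ + F (wordVal F u₁) + (a₂ + F (wordVal F u₂)) + (a₃ + F (wordVal F u₃)) +
            (a₄ + F (wordVal F u₄)) + (a₅ + F (wordVal F u₅))
          = (a₁ + a₂ + a₃ + a₄ + a₅) + (F (wordVal F u₁) + F (wordVal F u₂) +
            F (wordVal F u₃) + F (wordVal F u₄) + F (wordVal F u₅)) := by abel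
        _ = (s + F s') + (F (wordVal F t) + F (F (wordVal F t'))) := by rw [hhead, h1]
        _ = s + F (wordVal F t) + F (s' + F (wordVal F t')) := by rw [map_add]; abel

lemma add3 (h0 : (0:Γ) ∈ Sig)
    (h5 : ∀ x₁ ∈ Sig, ∀ x₂ ∈ Sig, ∀ x₃ ∈ Sig, ∀ x₄ ∈ Sig, ∀ x₅ ∈ Sig,
      ∃ t ∈ Sig, ∃ t' ∈ Sig, x₁ + x₂ + x₃ + x₄ + x₅ = t + F t') :
    ∀ (n : ℕ) (w₁ w₂ w₃ : List Γ) (s : Γ), s ∈ Sig →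
      (∀ y ∈ w₁, y ∈ Sig) → (∀ y ∈ w₂, y ∈ Sig) → (∀ y ∈ w₃, y ∈ Sig) →
      w₁.length = n → w₂.length = n → w₃.length = n →
      ∃ u : List Γ, (∀ y ∈ u, y ∈ Sig) ∧ u.length = n + 1 ∧
        wordVal F u = s + (wordVal F w₁ + wordVal F w₂ + wordVal F w₃) := by
  intro n
  induction n with
  | zero =>
    intro w₁ w₂ w₃ s hs _ _ _ l₁ l₂ l₃
    rw [List.length_eq_zero_iff] at l₁ l₂ l₃
    subst l₁; subst l₂; subst l₃
    exact ⟨[s], by simpa using hs, rfl, by simp [wordVal]⟩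
  | succ n ih =>
    intro w₁ w₂ w₃ s hs e₁ e₂ e₃ l₁ l₂ l₃
    obtain ⟨a₁, u₁, rfl, m₁⟩ := cons_of_len l₁
    obtain ⟨a₂, u₂, rfl, m₂⟩ := cons_of_len l₂
    obtain ⟨a₃, u₃, rfl, m₃⟩ := cons_of_len l₃
    obtain ⟨c, hc, c', hc', hhead⟩ :=
      h5 s hs a₁ (e₁ _ (by simp)) a₂ (e₂ _ (by simp)) a₃ (e₃ _ (by simp)) 0 h0
    obtain ⟨u, hu, lu, hval⟩ := ih u₁ u₂ u₃ c' hc' (fun y hy => e₁ y (by simp [hy]))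
      (fun y hy => e₂ y (by simp [hy])) (fun y hy => e₃ y (by simp [hy])) m₁ m₂ m₃
    refine ⟨c :: u, ?_, by simp [lu], ?_⟩
    · intro y hy; rcases List.mem_cons.1 hy with h | h
      · exact h ▸ hc
      · exact hu y h
    · simp only [wordVal, hval, map_add]
      have : s + a₁ + a₂ + a₃ = c + F c' := by rw [← hhead]; abel
      calc c + (F c' + (F (wordVal F u₁) + F (wordVal F u₂) + F (wordVal F u₃)))
          = (c + F c') + (F (wordVal F u₁) + F (wordVal F u₂) + F (wordVal F u₃)) := by abel
        _ = (s + a₁ + a₂ + a₃) + (F (wordVal F u₁) + F (wordVal F u₂) + F (wordVal F u₃)) := by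
            rw [this]
        _ = s + (a₁ + F (wordVal F u₁) + (a₂ + F (wordVal F u₂)) + (a₃ + F (wordVal F u₃))) := by
            abel

end Aux

/-- If `Σ` is an `F`-spanning set for `Γ` and `m > 0`, then
`Σ^(m) = {[w]_F : w a word over Σ of length m}` is an `F`-spanning set for `Γ`. -/
theorem sigmaPow_isSpanningSet {Γ : Type*} [AddCommGroup Γ] (F : AddMonoid.End Γ)
    (Sig : Set Γ) (hSig : IsSpanningSet F Sig) (m : ℕ) (hm : 0 < m) :
    IsSpanningSet F (sigmaPow F Sig m) := by
  obtain ⟨hfin, h0, hneg, hF, hspan, h5, h3⟩ := hSig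
  refine ⟨?_, ?_, ?_, ?_, ?_, ?_, ?_⟩
  · -- finiteness
    clear hm
    induction m with
    | zero =>
      refine (Set.finite_singleton (0:Γ)).subset ?_
      rintro x ⟨w, _, hl, hv⟩
      rw [List.length_eq_zero_iff] at hl
      subst hl
      simp [wordVal] at hv
      simp [← hv]
    | succ n ih =>
      refine (hfin.add (ih.image F)).subset ?_
      rintro x ⟨w, hw, hl, hv⟩
      obtain ⟨a, t, rfl, lt⟩ := cons_of_len hl
      have : x = a + F (wordVal F t) := by rw [← hv]; rfl
      rw [this]
      exact Set.add_mem_add (hw a (by simp))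
        ⟨wordVal F t, ⟨t, fun y hy => hw y (by simp [hy]), lt, rfl⟩, rfl⟩
  · exact mem_sigmaPow_of_mem F h0 h0 hm
  · rintro x ⟨w, hw, hl, hv⟩
    exact ⟨w.map (fun y => -y), fun y hy => by
        obtain ⟨z, hz, rfl⟩ := List.mem_map.1 hy; exact hneg z (hw z hz),
      by simp [hl], by rw [wordVal_map_neg, hv]⟩
  · rintro x ⟨w, hw, hl, hv⟩
    obtain ⟨k, rfl⟩ : ∃ k, m = k + 1 := ⟨m - 1, by omega⟩
    obtain ⟨a, t, rfl, lt⟩ := cons_of_len hl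
    have hv' : a + F (wordVal F t) = F x := hv
    have hmem : x - wordVal F t ∈ Sig := by
      apply hF
      have : F (x - wordVal F t) = a := by
        rw [map_sub, ← hv']; abel
      rw [this]
      exact hw a (by simp)
    obtain ⟨u, hu, lu, hval⟩ := add3 F h0 h5 k t (List.replicate k 0) (List.replicate k 0)
      (x - wordVal F t) hmem (fun y hy => hw y (by simp [hy]))
      (fun y hy => by rwa [List.eq_of_mem_replicate hy])
      (fun y hy => by rwa [List.eq_of_mem_replicate hy]) lt (by simp) (by simp)
    refine ⟨u, hu, lu, ?_⟩
    rw [hval, wordVal_replicate_zero]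
    abel
  · intro x
    obtain ⟨w, hw, hv⟩ := hspan x
    exact ⟨w, fun y hy => mem_sigmaPow_of_mem F h0 (hw y hy) hm, hv⟩
  · rintro x₁ ⟨w₁, e₁, l₁, rfl⟩ x₂ ⟨w₂, e₂, l₂, rfl⟩ x₃ ⟨w₃, e₃, l₃, rfl⟩
      x₄ ⟨w₄, e₄, l₄, rfl⟩ x₅ ⟨w₅, e₅, l₅, rfl⟩
    obtain ⟨t, t', ht, ht', lt, lt', hsum⟩ :=
      sum5 F h5 m w₁ w₂ w₃ w₄ w₅ e₁ e₂ e₃ e₄ e₅ l₁ l₂ l₃ l₄ l₅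
    exact ⟨wordVal F t, ⟨t, ht, lt, rfl⟩, wordVal F t', ⟨t', ht', lt', rfl⟩, hsum⟩
  · rintro x₁ ⟨w₁, e₁, l₁, rfl⟩ x₂ ⟨w₂, e₂, l₂, rfl⟩ x₃ ⟨w₃, e₃, l₃, rfl⟩ ⟨y, hy⟩
    obtain ⟨k, rfl⟩ : ∃ k, m = k + 1 := ⟨m - 1, by omega⟩
    obtain ⟨a₁, u₁, rfl, m₁⟩ := cons_of_len l₁
    obtain ⟨a₂, u₂, rfl, m₂⟩ := cons_of_len l₂
    obtain ⟨a₃, u₃, rfl, m₃⟩ := cons_of_len l₃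
    simp only [wordVal] at hy ⊢
    have hhead : a₁ + a₂ + a₃ =
        F (y - (wordVal F u₁ + wordVal F u₂ + wordVal F u₃)) := by
      rw [map_sub, map_add, map_add, ← hy]; abel
    obtain ⟨s, hs, hsval⟩ := h3 a₁ (e₁ _ (by simp)) a₂ (e₂ _ (by simp)) a₃ (e₃ _ (by simp))
      ⟨_, hhead⟩
    obtain ⟨u, hu, lu, hval⟩ := add3 F h0 h5 k u₁ u₂ u₃ s hs
      (fun y hy => e₁ y (by simp [hy])) (fun y hy => e₂ y (by simp [hy]))
      (fun y hy => e₃ y (by simp [hy])) m₁ m₂ m₃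
    refine ⟨wordVal F u, ⟨u, hu, lu, rfl⟩, ?_⟩
    rw [hval, map_add, ← hsval, map_add, map_add]
    abel
end

section
/- Suppose F is injective, Σ is an F-spanning set for Γ, and m > 0 is an integer. Then Σ^(m) := {[w]_F : w a word over Σ of length m} is an F^m-spanning set for Γ. -/
open Pointwise

/-! View `Σ^(n)` as the `n`-digit numbers in base `F` with digits in `Σ`. By (iv), three
`n`-digit numbers and two digits add up to an `n`-digit number plus `F^n` of a sum of two digits;
by (v) and injectivity of `F`, if `F^n y` is a digit plus an `n`-digit number, then `y` is a digit.
For `m ≥ 2` a sum of four digits, being some `s + F s'`, is again in `Σ^(m)`, which gives (iv) and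
(v) for `Σ^(m)` and `F^m`; (iii) follows by cutting a digit string into blocks of length `m`. -/

section

variable {Γ : Type*} [AddCommGroup Γ] {F : AddMonoid.End Γ} {Sig : Set Γ}

lemma AddMonoid.End.pow_succ_apply (F : AddMonoid.End Γ) (n : ℕ) (x : Γ) :
    (F ^ (n + 1)) x = F ((F ^ n) x) := by
  rw [pow_succ']
  rfl

lemma sigmaPow_zero : sigmaPow F Sig 0 = {0} := by
  ext x
  simp [sigmaPow, List.length_eq_zero_iff, wordVal, eq_comm]

lemma sigmaPow_succ (n : ℕ) :
    sigmaPow F Sig (n + 1) = Set.image2 (fun a b => a + F b) Sig (sigmaPow F Sig n) := by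
  ext x
  constructor
  · rintro ⟨w, hw, hlen, rfl⟩
    obtain ⟨a, w, rfl⟩ := List.exists_of_length_succ w hlen
    rw [List.forall_mem_cons] at hw
    exact ⟨a, hw.1, wordVal F w, ⟨w, hw.2, by simpa using hlen, rfl⟩, rfl⟩
  · rintro ⟨a, ha, _, ⟨w, hw, rfl, rfl⟩, rfl⟩
    exact ⟨a :: w, List.forall_mem_cons.2 ⟨ha, hw⟩, rfl, rfl⟩

lemma sigmaPow_one : sigmaPow F Sig 1 = Sig := by
  simp [sigmaPow_succ, sigmaPow_zero]

lemma sigmaPow_finite (hfin : Sig.Finite) (n : ℕ) : (sigmaPow F Sig n).Finite := by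
  induction n with
  | zero => simp [sigmaPow_zero]
  | succ n ih => rw [sigmaPow_succ]; exact hfin.image2 _ ih

lemma sigmaPow_mono (h0 : (0 : Γ) ∈ Sig) : Monotone (sigmaPow F Sig) := by
  refine monotone_nat_of_le_succ fun n => ?_
  induction n with
  | zero =>
    rw [sigmaPow_zero, Set.singleton_subset_iff, sigmaPow_succ, sigmaPow_zero]
    exact ⟨0, h0, 0, rfl, by simp⟩
  | succ n ih =>
    intro x hx
    rw [sigmaPow_succ] at hx ⊢
    exact Set.image2_subset_left ih hx

lemma zero_mem_sigmaPow (h0 : (0 : Γ) ∈ Sig) (n : ℕ) : 0 ∈ sigmaPow F Sig n :=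
  sigmaPow_mono h0 (Nat.zero_le n) (by simp [sigmaPow_zero])

lemma subset_sigmaPow (h0 : (0 : Γ) ∈ Sig) {n : ℕ} (hn : 0 < n) : Sig ⊆ sigmaPow F Sig n :=
  sigmaPow_one.symm.subset.trans (sigmaPow_mono h0 hn)

lemma add_apply_mem_sigmaPow (h0 : (0 : Γ) ∈ Sig) {n : ℕ} (hn : 2 ≤ n) {s s' : Γ}
    (hs : s ∈ Sig) (hs' : s' ∈ Sig) : s + F s' ∈ sigmaPow F Sig n :=
  sigmaPow_mono h0 hn <| by
    rw [sigmaPow_succ, sigmaPow_one]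
    exact Set.mem_image2_of_mem hs hs'

lemma neg_mem_sigmaPow (hneg : ∀ x ∈ Sig, -x ∈ Sig) {n : ℕ} {x : Γ} (hx : x ∈ sigmaPow F Sig n) :
    -x ∈ sigmaPow F Sig n := by
  induction n generalizing x with
  | zero => simp_all [sigmaPow_zero]
  | succ n ih =>
    rw [sigmaPow_succ] at hx ⊢
    obtain ⟨a, ha, b, hb, rfl⟩ := hx
    exact ⟨-a, hneg a ha, -b, ih hb, by simp only [map_neg, neg_add]⟩

lemma exists_eq_add_pow_apply_of_mem_sigmaPow_add {m k : ℕ} {x : Γ}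
    (hx : x ∈ sigmaPow F Sig (m + k)) :
    ∃ a ∈ sigmaPow F Sig m, ∃ b ∈ sigmaPow F Sig k, x = a + (F ^ m) b := by
  induction m generalizing x with
  | zero => exact ⟨0, by simp [sigmaPow_zero], x, by simpa using hx, by simp⟩
  | succ m ih =>
    rw [Nat.add_right_comm, sigmaPow_succ] at hx
    obtain ⟨s, hs, y, hy, rfl⟩ := hx
    obtain ⟨a, ha, b, hb, rfl⟩ := ih hy
    refine ⟨s + F a, by rw [sigmaPow_succ]; exact Set.mem_image2_of_mem hs ha, b, hb, ?_⟩
    simp only [F.pow_succ_apply, map_add, add_assoc]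

lemma exists_wordVal_pow_eq_of_mem_sigmaPow (h0 : (0 : Γ) ∈ Sig) {m : ℕ} (hm : 0 < m) {n : ℕ}
    {x : Γ} (hx : x ∈ sigmaPow F Sig n) :
    ∃ W : List Γ, (∀ y ∈ W, y ∈ sigmaPow F Sig m) ∧ wordVal (F ^ m) W = x := by
  induction n using Nat.strong_induction_on generalizing x with
  | _ n ih =>
  rcases le_or_gt n m with hnm | hmn
  · exact ⟨[x], by simpa using sigmaPow_mono h0 hnm hx, by simp [wordVal]⟩
  · rw [← Nat.add_sub_of_le hmn.le] at hx
    obtain ⟨a, ha, b, hb, rfl⟩ := exists_eq_add_pow_apply_of_mem_sigmaPow_add hx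
    obtain ⟨W, hW, rfl⟩ := ih (n - m) (by omega) hb
    exact ⟨a :: W, List.forall_mem_cons.2 ⟨ha, hW⟩, rfl⟩

lemma mem_of_pow_apply_eq_add (hF : Function.Injective F) (hSig : IsSpanningSet F Sig) {n : ℕ}
    {u c y : Γ} (hu : u ∈ sigmaPow F Sig n) (hc : c ∈ Sig) (hy : (F ^ n) y = c + u) : y ∈ Sig := by
  obtain ⟨-, h0, -, -, -, -, h3⟩ := hSig
  induction n generalizing u c y with
  | zero =>
    rw [sigmaPow_zero] at hu
    simp_all
  | succ n ih =>
    rw [sigmaPow_succ] at hu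
    obtain ⟨x, hx, u, hu, rfl⟩ := hu
    simp only [F.pow_succ_apply] at hy
    obtain ⟨t, ht, hct⟩ := h3 c hc x hx 0 h0 ⟨(F ^ n) y - u, by rw [map_sub, hy]; abel⟩
    refine ih hu ht (hF ?_)
    rw [hy, map_add, ← hct]
    abel

lemma exists_add_eq_add_pow_apply (hSig : IsSpanningSet F Sig) {n : ℕ} {x₁ x₂ x₃ c₁ c₂ : Γ}
    (hx₁ : x₁ ∈ sigmaPow F Sig n) (hx₂ : x₂ ∈ sigmaPow F Sig n) (hx₃ : x₃ ∈ sigmaPow F Sig n)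
    (hc₁ : c₁ ∈ Sig) (hc₂ : c₂ ∈ Sig) :
    ∃ u ∈ sigmaPow F Sig n, ∃ d₁ ∈ Sig, ∃ d₂ ∈ Sig,
      x₁ + x₂ + x₃ + c₁ + c₂ = u + (F ^ n) (d₁ + d₂) := by
  obtain ⟨-, h0, -, -, -, h5, -⟩ := hSig
  induction n generalizing x₁ x₂ x₃ c₁ c₂ with
  | zero =>
    simp only [sigmaPow_zero, Set.mem_singleton_iff] at hx₁ hx₂ hx₃
    subst hx₁ hx₂ hx₃
    exact ⟨0, by simp [sigmaPow_zero], c₁, hc₁, c₂, hc₂, by simp⟩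
  | succ n ih =>
    rw [sigmaPow_succ] at hx₁ hx₂ hx₃
    obtain ⟨a₁, ha₁, y₁, hy₁, rfl⟩ := hx₁
    obtain ⟨a₂, ha₂, y₂, hy₂, rfl⟩ := hx₂
    obtain ⟨a₃, ha₃, y₃, hy₃, rfl⟩ := hx₃
    obtain ⟨t, ht, t', ht', hdigit⟩ := h5 a₁ ha₁ a₂ ha₂ a₃ ha₃ c₁ hc₁ c₂ hc₂
    obtain ⟨u, hu, d₁, hd₁, d₂, hd₂, hrest⟩ := ih hy₁ hy₂ hy₃ ht' h0
    refine ⟨t + F u, by rw [sigmaPow_succ]; exact Set.mem_image2_of_mem ht hu, d₁, hd₁, d₂, hd₂, ?_⟩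
    calc a₁ + F y₁ + (a₂ + F y₂) + (a₃ + F y₃) + c₁ + c₂
        = (a₁ + a₂ + a₃ + c₁ + c₂) + F (y₁ + y₂ + y₃) := by simp only [map_add]; abel
      _ = t + F (y₁ + y₂ + y₃ + t' + 0) := by rw [hdigit]; simp only [map_add, map_zero]; abel
      _ = t + F u + (F ^ (n + 1)) (d₁ + d₂) := by rw [hrest, F.pow_succ_apply, map_add, add_assoc]

lemma exists_sum_five_eq_add_pow_apply (hSig : IsSpanningSet F Sig) {m : ℕ} (hm : 2 ≤ m) :
    ∀ x₁ ∈ sigmaPow F Sig m, ∀ x₂ ∈ sigmaPow F Sig m, ∀ x₃ ∈ sigmaPow F Sig m,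
      ∀ x₄ ∈ sigmaPow F Sig m, ∀ x₅ ∈ sigmaPow F Sig m,
      ∃ t ∈ sigmaPow F Sig m, ∃ t' ∈ sigmaPow F Sig m,
        x₁ + x₂ + x₃ + x₄ + x₅ = t + (F ^ m) t' := by
  intro x₁ hx₁ x₂ hx₂ x₃ hx₃ x₄ hx₄ x₅ hx₅
  have ⟨_, h0, _, _, _, h5, _⟩ := hSig
  obtain ⟨u, hu, d₁, hd₁, d₂, hd₂, hu_eq⟩ := exists_add_eq_add_pow_apply hSig hx₁ hx₂ hx₃ h0 h0
  obtain ⟨v, hv, e₁, he₁, e₂, he₂, hv_eq⟩ := exists_add_eq_add_pow_apply hSig hu hx₄ hx₅ h0 h0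
  obtain ⟨s, hs, s', hs', hcarry⟩ := h5 d₁ hd₁ d₂ hd₂ e₁ he₁ e₂ he₂ 0 h0
  refine ⟨v, hv, s + F s', add_apply_mem_sigmaPow h0 hm hs hs', ?_⟩
  simp only [add_zero] at hu_eq hv_eq hcarry
  calc x₁ + x₂ + x₃ + x₄ + x₅ = (u + x₄ + x₅) + (F ^ m) (d₁ + d₂) := by rw [hu_eq]; abel
    _ = v + (F ^ m) (d₁ + d₂ + e₁ + e₂) := by rw [hv_eq]; simp only [map_add]; abel
    _ = v + (F ^ m) (s + F s') := by rw [hcarry]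

lemma exists_sum_three_eq_pow_apply (hF : Function.Injective F) (hSig : IsSpanningSet F Sig)
    {m : ℕ} (hm : 2 ≤ m) :
    ∀ x₁ ∈ sigmaPow F Sig m, ∀ x₂ ∈ sigmaPow F Sig m, ∀ x₃ ∈ sigmaPow F Sig m,
      (∃ y : Γ, x₁ + x₂ + x₃ = (F ^ m) y) →
        ∃ t ∈ sigmaPow F Sig m, x₁ + x₂ + x₃ = (F ^ m) t := by
  rintro x₁ hx₁ x₂ hx₂ x₃ hx₃ ⟨y, hy⟩
  have ⟨_, h0, _, _, _, h5, _⟩ := hSig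
  obtain ⟨u, hu, d₁, hd₁, d₂, hd₂, hu_eq⟩ := exists_add_eq_add_pow_apply hSig hx₁ hx₂ hx₃ h0 h0
  simp only [add_zero] at hu_eq
  have hdigit : y - (d₁ + d₂) ∈ Sig :=
    mem_of_pow_apply_eq_add hF hSig hu h0 (by rw [map_sub, ← hy, hu_eq]; abel)
  obtain ⟨s, hs, s', hs', hsum⟩ := h5 _ hdigit d₁ hd₁ d₂ hd₂ 0 h0 0 h0
  refine ⟨s + F s', add_apply_mem_sigmaPow h0 hm hs hs', ?_⟩
  rw [hy, ← hsum, add_zero, add_zero, add_assoc, sub_add_cancel]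

end

/-- If `F` is injective, `Σ` is an `F`-spanning set for `Γ`, and
`m > 0`, then `Σ^(m)` is an `F^m`-spanning set for `Γ`. -/
theorem sigmaPow_isSpanningSet_pow {Γ : Type*} [AddCommGroup Γ] (F : AddMonoid.End Γ)
    (hF : Function.Injective ⇑F) (Sig : Set Γ) (hSig : IsSpanningSet F Sig)
    (m : ℕ) (hm : 0 < m) :
    IsSpanningSet (F ^ m) (sigmaPow F Sig m) := by
  obtain rfl | hm₂ : m = 1 ∨ 2 ≤ m := by omega
  · rwa [sigmaPow_one, pow_one]
  have ⟨hfin, h0, hneg, _, hspan, _, _⟩ := hSig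
  refine ⟨sigmaPow_finite hfin m, zero_mem_sigmaPow h0 m, fun x hx => neg_mem_sigmaPow hneg hx,
    ?_, ?_, exists_sum_five_eq_add_pow_apply hSig hm₂, exists_sum_three_eq_pow_apply hF hSig hm₂⟩
  · intro x hx
    exact subset_sigmaPow h0 hm (mem_of_pow_apply_eq_add hF hSig hx h0 (zero_add _).symm)
  · intro x
    obtain ⟨w, hw, rfl⟩ := hspan x
    exact exists_wordVal_pow_eq_of_mem_sigmaPow h0 hm ⟨w, hw, rfl, rfl⟩
end

section
/- Let Γ be a finitely generated abelian group with an injective endomorphism F. Suppose Γ admits a function h : Γ → [0,∞) satisfying: (1) there exist D > 1 and κ > 0 such that h(−a) ≤ D·h(a) + κ and h(a + b) ≤ D·(h(a) + h(b)) + κ for all a, b ∈ Γ; (2) the Northcott property: for every N, the set {a ∈ Γ : h(a) ≤ N} is finite; (3) canonicity: there exist C > 1 and a finite subset E ⊆ Γ such that h(F(a)) ≥ C·h(a) for all a ∈ Γ \ E. Then there is an integer r > 0 such that Γ has an F^r-spanning set. -/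
open Pointwise

/-!
Replacing `h` by `a ↦ max (h a) (h (-a))` makes the height symmetric and keeps (1)–(3).
Iterating canonicity, `G = F^r` multiplies heights by at least `C^r > (3D)^3` outside a finite
set, and since `F` is injective, `G(Γ)` has full rank, hence finite index, in `Γ`. Take for `Σ` the elements of
height at most `B`, where `B` bounds the heights of a set of coset representatives of `G(Γ)` and
of the exceptional set. One addition multiplies height bounds `N ≥ B` by at most `3D`, so a sum of
at most six elements of `Σ` has height at most `(3D)^3 B`, and its `G`-preimage, if any, lies in
`Σ`. Writing `x = t + G y` with `t` a representative gives `h y ≤ N` whenever `h x ≤ N + 1` and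
`N ≥ B`, which produces the `G`-adic expansions digit by digit.
-/

open Function Filter

theorem AddMonoidHom.exists_zsmul_mem_range_of_injective {Γ : Type*} [AddCommGroup Γ]
    [AddGroup.FG Γ] {G : Γ →+ Γ} (hG : Injective G) (x : Γ) :
    ∃ n : ℤ, n ≠ 0 ∧ n • x ∈ G.range := by
  have : Module.Finite ℤ Γ := Module.Finite.iff_addGroup_fg.mpr ‹_›
  let g := G.toIntLinearMap
  have hcoker : Module.finrank ℤ (Γ ⧸ LinearMap.range g) = 0 := by
    have := (LinearMap.range g).finrank_quotient_add_finrank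
    rw [LinearMap.finrank_range_of_inj (f := g) hG] at this
    omega
  obtain ⟨n, hn, hnx⟩ := Module.finrank_eq_zero_iff.mp hcoker (Submodule.Quotient.mk x)
  rw [← Submodule.Quotient.mk_smul, Submodule.Quotient.mk_eq_zero] at hnx
  exact ⟨n, hn, hnx⟩

theorem AddMonoidHom.finiteIndex_range_of_injective {Γ : Type*} [AddCommGroup Γ]
    [AddGroup.FG Γ] {G : Γ →+ Γ} (hG : Injective G) : G.range.FiniteIndex := by
  rw [AddSubgroup.finiteIndex_iff_finite_quotient]
  refine AddCommGroup.finite_of_fg_isAddTorsion _ fun q => ?_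
  obtain ⟨x, rfl⟩ := QuotientAddGroup.mk_surjective q
  obtain ⟨n, hn, hnx⟩ := G.exists_zsmul_mem_range_of_injective hG x
  refine isOfFinAddOrder_iff_zsmul_eq_zero.mpr ⟨n, hn, ?_⟩
  rwa [← QuotientAddGroup.mk_zsmul, QuotientAddGroup.eq_zero_iff]

theorem AddSubgroup.exists_finite_sub_mem {Γ : Type*} [AddCommGroup Γ] (K : AddSubgroup Γ)
    [K.FiniteIndex] : ∃ R : Set Γ, R.Finite ∧ ∀ x, ∃ t ∈ R, x - t ∈ K := by
  have := K.finite_quotient_of_finiteIndex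
  refine ⟨Set.range fun q : Γ ⧸ K => q.out, Set.finite_range _, fun x => ⟨_, ⟨x, rfl⟩, ?_⟩⟩
  rw [sub_eq_neg_add]
  exact QuotientAddGroup.eq.mp (QuotientAddGroup.out_eq' _)

theorem eventually_pow_mul_le_iterate {α : Type*} {G : α → α} (hG : Injective G) {H : α → ℝ}
    {c : ℝ} (hc : 0 ≤ c) (hexp : ∀ᶠ a in cofinite, c * H a ≤ H (G a)) (n : ℕ) :
    ∀ᶠ a in cofinite, c ^ n * H a ≤ H (G^[n] a) := by
  induction n with
  | zero => simp
  | succ n ih =>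
    filter_upwards [hexp, hG.tendsto_cofinite.eventually ih] with a ha ha'
    calc c ^ (n + 1) * H a = c ^ n * (c * H a) := by ring
      _ ≤ c ^ n * H (G a) := mul_le_mul_of_nonneg_left ha (pow_nonneg hc n)
      _ ≤ H (G^[n + 1] a) := ha'

theorem apply_le_of_apply_map_le {α : Type*} {G : α → α} {H : α → ℝ} {c N : ℝ} {E : Set α}
    (hc : 0 < c) (hexp : ∀ a ∉ E, c * H a ≤ H (G a)) (hE : ∀ a ∈ E, H a ≤ N) {y : α}
    (hy : H (G y) ≤ c * N) : H y ≤ N := by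
  by_cases hyE : y ∈ E
  · exact hE y hyE
  · exact le_of_mul_le_mul_left ((hexp y hyE).trans hy) hc

section Height

variable {Γ : Type*} [AddCommGroup Γ]

def symmetrize (h : Γ → ℝ) (a : Γ) : ℝ := max (h a) (h (-a))

theorem le_symmetrize (h : Γ → ℝ) (a : Γ) : h a ≤ symmetrize h a := le_max_left _ _

theorem symmetrize_neg (h : Γ → ℝ) (a : Γ) : symmetrize h (-a) = symmetrize h a := by
  rw [symmetrize, symmetrize, neg_neg, max_comm]

theorem symmetrize_add_le {h : Γ → ℝ} {D κ : ℝ} (hD : 0 ≤ D)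
    (h_add : ∀ a b, h (a + b) ≤ D * (h a + h b) + κ) (a b : Γ) :
    symmetrize h (a + b) ≤ D * (symmetrize h a + symmetrize h b) + κ := by
  have hmono : ∀ u v, h u ≤ symmetrize h a → h v ≤ symmetrize h b →
      h (u + v) ≤ D * (symmetrize h a + symmetrize h b) + κ := fun u v hu hv =>
    (h_add u v).trans (by gcongr)
  refine max_le (hmono a b (le_max_left _ _) (le_max_left _ _)) ?_
  rw [neg_add]
  exact hmono (-a) (-b) (le_max_right _ _) (le_max_right _ _)

theorem eventually_mul_symmetrize_le {h : Γ → ℝ} {F : AddMonoid.End Γ} {c : ℝ} (hc : 0 ≤ c)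
    (h_exp : ∀ᶠ a in cofinite, c * h a ≤ h (F a)) :
    ∀ᶠ a in cofinite, c * symmetrize h a ≤ symmetrize h (F a) := by
  filter_upwards [h_exp, neg_injective.tendsto_cofinite.eventually h_exp] with a ha ha'
  rw [symmetrize, symmetrize, mul_max_of_nonneg _ _ hc, ← map_neg]
  exact max_le_max ha ha'

variable {G : AddMonoid.End Γ} {H : Γ → ℝ}

theorem apply_add_le_three_mul {D κ : ℝ} (hD : 1 ≤ D)
    (H_add : ∀ a b, H (a + b) ≤ D * (H a + H b) + κ) {a b : Γ} {N : ℝ} (hN : 0 ≤ N)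
    (hκ : κ ≤ N) (ha : H a ≤ N) (hb : H b ≤ N) : H (a + b) ≤ 3 * D * N := by
  nlinarith [H_add a b]

theorem exists_wordVal_eq {B : ℝ}
    (hdiv : ∀ x N, B ≤ N → H x ≤ N + 1 → ∃ t, H t ≤ B ∧ ∃ y, H y ≤ N ∧ x = t + G y) (x : Γ) :
    ∃ w : List Γ, (∀ t ∈ w, H t ≤ B) ∧ wordVal G w = x := by
  suffices ∀ n : ℕ, ∀ x, H x ≤ B + n → ∃ w : List Γ, (∀ t ∈ w, H t ≤ B) ∧ wordVal G w = x from
    this ⌈H x - B⌉₊ x (by linarith [Nat.le_ceil (H x - B)])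
  intro n
  induction n with
  | zero => exact fun x hx => ⟨[x], by simpa using hx, by simp [wordVal]⟩
  | succ n ih =>
    intro x hx
    obtain ⟨t, ht, y, hy, rfl⟩ := hdiv x (B + n) (by simp) (by push_cast at hx; linarith)
    obtain ⟨w, hw, rfl⟩ := ih y hy
    exact ⟨t :: w, by simpa [ht] using hw, rfl⟩

theorem isSpanningSet_of_descent {K B : ℝ} (hK : 2 ≤ K) (hB : 1 ≤ B)
    (H_neg : ∀ a, H (-a) = H a) (H_fin : {a | H a ≤ B}.Finite) (H_zero : H 0 ≤ B)
    (H_add : ∀ {a b N}, B ≤ N → H a ≤ N → H b ≤ N → H (a + b) ≤ K * N)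
    (hdescent : ∀ y N, B ≤ N → H (G y) ≤ K ^ 3 * N → H y ≤ N)
    (hdiv : ∀ x, ∃ t, H t ≤ B ∧ ∃ y, x = t + G y) :
    IsSpanningSet G {a | H a ≤ B} := by
  have hle {N : ℝ} (hN : 0 ≤ N) : N ≤ K * N := by nlinarith
  have hBK : B ≤ K * B := hle (by linarith)
  have hBKK : B ≤ K * (K * B) := hBK.trans (hle (by linarith))
  have hKKK (N : ℝ) : K * (K * (K * N)) = K ^ 3 * N := by ring
  have hneg {t : Γ} (ht : H t ≤ B) : H (-t) ≤ B := by rwa [H_neg]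
  refine ⟨H_fin, H_zero, fun x => hneg, fun x hx => hdescent x B le_rfl ?_, ?_, ?_, ?_⟩
  · exact le_trans hx (hKKK B ▸ hBKK.trans (hle (by linarith)))
  · refine exists_wordVal_eq fun x N hN hx => ?_
    obtain ⟨t, ht, y, rfl⟩ := hdiv x
    refine ⟨t, ht, y, hdescent y N hN ?_, rfl⟩
    have hGy := H_add (a := t + G y) (b := -t) (by linarith) hx (by linarith [hneg ht])
    rw [add_neg_cancel_comm] at hGy
    have : N + 1 ≤ K * (K * N) := by nlinarith
    exact hKKK N ▸ hGy.trans (mul_le_mul_of_nonneg_left this (by linarith))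
  · intro x₁ h₁ x₂ h₂ x₃ h₃ x₄ h₄ x₅ h₅
    obtain ⟨t, ht, y, hy⟩ := hdiv (x₁ + x₂ + x₃ + x₄ + x₅)
    refine ⟨t, ht, y, hdescent y B le_rfl ?_, hy⟩
    -- six summands, hence three rounds of pairwise additions
    have hGy : G y = (x₁ + x₂ + (x₃ + x₄)) + (x₅ + -t) := by
      rw [eq_sub_of_add_eq' hy.symm]
      abel
    have h₁₂₃₄ := H_add (N := K * B) hBK (H_add le_rfl h₁ h₂) (H_add le_rfl h₃ h₄)
    have h₅t := (H_add le_rfl h₅ (hneg ht)).trans (hle (by linarith))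
    exact hGy ▸ hKKK B ▸ H_add hBKK h₁₂₃₄ h₅t
  · rintro x₁ h₁ x₂ h₂ x₃ h₃ ⟨y, hy⟩
    refine ⟨y, hdescent y B le_rfl ?_, hy⟩
    have h₁₂₃ := H_add (N := K * B) hBK (H_add le_rfl h₁ h₂) ((show H x₃ ≤ B from h₃).trans hBK)
    exact hy ▸ hKKK B ▸ h₁₂₃.trans (hle (by linarith))

theorem exists_isSpanningSet_of_expanding (hG : (G : Γ →+ Γ).range.FiniteIndex) {D κ c : ℝ}
    (hD : 1 ≤ D) (H_neg : ∀ a, H (-a) = H a) (H_add : ∀ a b, H (a + b) ≤ D * (H a + H b) + κ)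
    (H_fin : ∀ N, {a | H a ≤ N}.Finite) (hc : (3 * D) ^ 3 ≤ c)
    (H_exp : ∀ᶠ a in cofinite, c * H a ≤ H (G a)) :
    ∃ B, IsSpanningSet G {a | H a ≤ B} := by
  obtain ⟨R, hR, hcover⟩ := (G : Γ →+ Γ).range.exists_finite_sub_mem
  set E := {a | ¬c * H a ≤ H (G a)}
  obtain ⟨B, hB, hBbound⟩ :=
    (((eventually_cofinite.mp H_exp).union hR).insert 0 |>.image H).bddAbove.exists_ge (max κ 1)
  have hbound {a : Γ} (ha : a ∈ insert 0 (E ∪ R)) : H a ≤ B := hBbound _ ⟨a, ha, rfl⟩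
  have hκB : κ ≤ B := (le_max_left _ _).trans hB
  have hB1 : 1 ≤ B := (le_max_right _ _).trans hB
  have hc0 : 0 < c := (pow_pos (by linarith) 3).trans_le hc
  refine ⟨B, isSpanningSet_of_descent (K := 3 * D) (by linarith) hB1
    H_neg (H_fin B) (hbound (Set.mem_insert _ _))
    (fun hN => apply_add_le_three_mul hD H_add (by linarith) (hκB.trans hN))
    (fun y N hN hy => ?_) (fun x => ?_)⟩
  · refine apply_le_of_apply_map_le hc0 (fun a ha => not_not.mp ha)
      (fun a ha => (hbound (Or.inr (Or.inl ha))).trans hN) ?_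
    exact hy.trans (mul_le_mul_of_nonneg_right hc (by linarith))
  · obtain ⟨t, htR, y, hy⟩ := hcover x
    exact ⟨t, hbound (Or.inr (Or.inr htR)), y, sub_eq_iff_eq_add'.mp hy.symm⟩

end Height

theorem exists_spanning_set_of_height_general {Γ : Type*} [AddCommGroup Γ] [AddGroup.FG Γ]
    (F : AddMonoid.End Γ) (hF : Function.Injective ⇑F)
    (h : Γ → ℝ)
    (h1 : ∃ D : ℝ, 1 < D ∧ ∃ κ : ℝ, 0 < κ ∧
      (∀ a : Γ, h (-a) ≤ D * h a + κ) ∧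
      (∀ a b : Γ, h (a + b) ≤ D * (h a + h b) + κ))
    (h2 : ∀ N : ℝ, {a : Γ | h a ≤ N}.Finite)
    (h3 : ∃ C : ℝ, 1 < C ∧ ∃ E : Set Γ, E.Finite ∧ ∀ a ∉ E, C * h a ≤ h (F a)) :
    ∃ r : ℕ, 0 < r ∧ ∃ Sig : Set Γ, IsSpanningSet (F ^ r) Sig := by
  obtain ⟨D, hD, κ, -, -, h_add⟩ := h1
  obtain ⟨C, hC, E, hE, h_can⟩ := h3
  have h_exp : ∀ᶠ a in cofinite, C * h a ≤ h (F a) :=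
    eventually_cofinite.mpr <| hE.subset fun a ha => by_contra fun haE => ha (h_can a haE)
  obtain ⟨r, hr⟩ := pow_unbounded_of_one_lt ((3 * D) ^ 3) hC
  have hr_pos : 0 < r := Nat.pos_of_ne_zero fun hr0 => by
    rw [hr0, pow_zero] at hr
    exact hr.not_ge (one_le_pow₀ (by linarith))
  have hFr : Injective ⇑(F ^ r) := by
    rw [AddMonoid.End.coe_pow]
    exact hF.iterate r
  have h_exp_r : ∀ᶠ a in cofinite, C ^ r * symmetrize h a ≤ symmetrize h ((F ^ r) a) := by
    rw [AddMonoid.End.coe_pow]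
    exact eventually_pow_mul_le_iterate hF (by linarith)
      (eventually_mul_symmetrize_le (by linarith) h_exp) r
  obtain ⟨B, hB⟩ := exists_isSpanningSet_of_expanding
    (AddMonoidHom.finiteIndex_range_of_injective hFr) hD.le (symmetrize_neg h)
    (symmetrize_add_le (by linarith) h_add)
    (fun N => (h2 N).subset fun a ha => (le_symmetrize h a).trans ha) hr.le h_exp_r
  exact ⟨r, hr_pos, _, hB⟩

/-- If the finitely generated abelian group `Γ` with injective
endomorphism `F` admits a height function `h` satisfying (1) quasi-subadditivity,
(2) the Northcott property, and (3) canonicity, then `Γ` has an `F^r`-spanning set for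
some `r > 0`. -/
theorem exists_spanning_set_of_height {Γ : Type*} [AddCommGroup Γ] [AddGroup.FG Γ]
    (F : AddMonoid.End Γ) (hF : Function.Injective ⇑F)
    (h : Γ → ℝ) (h_nonneg : ∀ a, 0 ≤ h a)
    (h1 : ∃ D : ℝ, 1 < D ∧ ∃ κ : ℝ, 0 < κ ∧
      (∀ a : Γ, h (-a) ≤ D * h a + κ) ∧
      (∀ a b : Γ, h (a + b) ≤ D * (h a + h b) + κ))
    (h2 : ∀ N : ℝ, {a : Γ | h a ≤ N}.Finite)
    (h3 : ∃ C : ℝ, 1 < C ∧ ∃ E : Set Γ, E.Finite ∧ ∀ a ∉ E, C * h a ≤ h (F a)) :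
    ∃ r : ℕ, 0 < r ∧ ∃ Sig : Set Γ, IsSpanningSet (F ^ r) Sig :=
  exists_spanning_set_of_height_general F hF h h1 h2 h3
end

section
/- Let Σ be an F-spanning set for Γ and S ⊆ Γ. Then S is (Σ,F)-automatic if and only if its (Σ,F)-kernel is finite, i.e., the collection of sets S_{x_0⋯x_{m−1}} := {x ∈ Γ : x_0 + F x_1 + ⋯ + F^{m−1} x_{m−1} + F^m x ∈ S}, as m ranges over ℕ and x_0,…,x_{m−1} over Σ (with S_∅ = S), contains only finitely many distinct subsets of Γ. -/
open Pointwise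

/-!
By Myhill–Nerode, the language `L = {w | [w]_F ∈ S}` is regular iff it has finitely many left
quotients. Since `[uv]_F = [u]_F + F^|u| [v]_F`, the left quotient of `L` by `u` is the set of
words `v` with `[v]_F ∈ S_u`. Every element of `Γ` is the value of a word over `Σ`, so taking
preimages under `v ↦ [v]_F` is injective, and the left quotients correspond bijectively to the
members of the kernel.
-/

section Kernel

variable {Γ : Type*} [AddCommGroup Γ] (F : AddMonoid.End Γ)

lemma wordVal_append (w v : List Γ) :
    wordVal F (w ++ v) = wordVal F w + (F ^ w.length) (wordVal F v) := by
  induction w with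
  | nil => simp [wordVal]
  | cons x xs ih =>
    simp only [List.cons_append, wordVal, ih, map_add, List.length_cons,
      AddMonoid.End.coe_pow, Function.iterate_succ_apply', add_assoc]

/-- The member `S_w` of the `(Σ,F)`-kernel of `S` (`S_[] = S`). -/
def kernelSet (S : Set Γ) (w : List Γ) : Set Γ :=
  {x | wordVal F w + (F ^ w.length) x ∈ S}

def valueLanguage (Sig T : Set Γ) : Language Sig :=
  {w | wordVal F (w.map Subtype.val) ∈ T}

variable {Sig : Set Γ}

lemma setOf_kernelSet_eq_range (S : Set Γ) :
    {T : Set Γ | ∃ w : List Γ, (∀ y ∈ w, y ∈ Sig) ∧ T = kernelSet F S w} =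
      Set.range fun u : List Sig => kernelSet F S (u.map Subtype.val) := by
  ext T
  constructor
  · rintro ⟨w, hw, rfl⟩
    lift w to List Sig using hw
    exact ⟨w, rfl⟩
  · rintro ⟨u, rfl⟩
    exact ⟨u.map Subtype.val, List.forall_mem_map.2 fun y _ => y.2, rfl⟩

lemma leftQuotient_valueLanguage (S : Set Γ) (u : List Sig) :
    (valueLanguage F Sig S).leftQuotient u =
      valueLanguage F Sig (kernelSet F S (u.map Subtype.val)) := by
  ext v
  change wordVal F ((u ++ v).map Subtype.val) ∈ S ↔ _
  rw [List.map_append, wordVal_append]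
  rfl

lemma valueLanguage_injective
    (hspan : ∀ x : Γ, ∃ w : List Γ, (∀ y ∈ w, y ∈ Sig) ∧ wordVal F w = x) :
    Function.Injective (valueLanguage F Sig) := by
  refine Set.preimage_injective.2 fun x => ?_
  obtain ⟨w, hw, rfl⟩ := hspan x
  lift w to List Sig using hw
  exact ⟨w, rfl⟩

lemma finite_range_leftQuotient_valueLanguage_iff
    (hspan : ∀ x : Γ, ∃ w : List Γ, (∀ y ∈ w, y ∈ Sig) ∧ wordVal F w = x) (S : Set Γ) :
    (Set.range (valueLanguage F Sig S).leftQuotient).Finite ↔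
      (Set.range fun u : List Sig => kernelSet F S (u.map Subtype.val)).Finite := by
  rw [funext (leftQuotient_valueLanguage F S), Set.range_comp',
    Set.finite_image_iff (valueLanguage_injective F hspan).injOn]

end Kernel

/-- `S ⊆ Γ` is `(Σ,F)`-automatic if and only if its `(Σ,F)`-kernel,
the collection of sets `S_w = {x : [w]_F + F^{length w} x ∈ S}` for words `w` over `Σ`,
is finite. -/
theorem isSFAutomatic_iff_kernel_finite {Γ : Type*} [AddCommGroup Γ]
    (F : AddMonoid.End Γ) (Sig : Set Γ) (hSig : IsSpanningSet F Sig) (S : Set Γ) :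
    IsSFAutomatic F Sig S ↔
      {T : Set Γ | ∃ w : List Γ, (∀ y ∈ w, y ∈ Sig) ∧
        T = {x : Γ | wordVal F w + (F ^ w.length) x ∈ S}}.Finite := by
  obtain ⟨-, -, -, -, hspan, -, -⟩ := hSig
  change (valueLanguage F Sig S).IsRegular ↔
    {T : Set Γ | ∃ w : List Γ, (∀ y ∈ w, y ∈ Sig) ∧ T = kernelSet F S w}.Finite
  rw [Language.isRegular_iff_finite_range_leftQuotient,
    finite_range_leftQuotient_valueLanguage_iff F hspan, setOf_kernelSet_eq_range]
end

section
/- Suppose Σ is an F-spanning set for Γ, Θ is an F^r-spanning set for Γ for some integer r > 0, and S ⊆ Γ. If S is (Σ,F)-automatic then S is (Θ,F^r)-automatic. In particular (taking r = 1), (Σ,F)-automaticity does not depend on the choice of F-spanning set Σ. -/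
open Pointwise

namespace SFAux

/-! ### Myhill–Nerode -/

section Lang
variable {α : Type*}

/-- left quotient of a language by a word -/
def lquot (L : Language α) (w : List α) : Language α := {v | w ++ v ∈ L}

lemma lquot_nil (L : Language α) : lquot L [] = L := rfl

lemma lquot_append (L : Language α) (w w' : List α) :
    lquot L (w ++ w') = lquot (lquot L w) w' := by
  ext v
  simp only [lquot, Set.mem_setOf_eq, List.append_assoc]
  exact Iff.rfl

theorem regular_of_finite {L : Language α} (h : (Set.range (lquot L)).Finite) :
    L.IsRegular := by
  have : Fintype ↥(Set.range (lquot L)) := h.fintype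
  let M : DFA α ↥(Set.range (lquot L)) :=
    { step := fun q a => ⟨lquot q.val [a], by
        obtain ⟨w, hw⟩ := q.2
        exact ⟨w ++ [a], by rw [lquot_append, hw]⟩⟩
      start := ⟨L, ⟨[], lquot_nil L⟩⟩
      accept := {q | [] ∈ q.val} }
  have hev : ∀ (w : List α) (q : ↥(Set.range (lquot L))),
      (M.evalFrom q w).val = lquot q.val w := by
    intro w
    induction w with
    | nil => intro q; simp [lquot_nil]
    | cons a w ih =>
      intro q
      have h1 : M.evalFrom q (a :: w) = M.evalFrom (M.step q a) w := rfl
      rw [h1, ih]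
      show lquot (lquot q.val [a]) w = lquot q.val (a :: w)
      rw [← lquot_append]
      rfl
  refine ⟨Fin (Fintype.card ↥(Set.range (lquot L))), inferInstance,
    DFA.reindex (Fintype.equivFin _) M, ?_⟩
  rw [DFA.accepts_reindex]
  ext x
  rw [DFA.mem_accepts]
  show [] ∈ (M.eval x).val ↔ x ∈ L
  rw [DFA.eval, hev]
  show x ++ [] ∈ L ↔ x ∈ L
  rw [List.append_nil]

theorem finite_of_regular {L : Language α} (h : L.IsRegular) :
    (Set.range (lquot L)).Finite := by
  obtain ⟨σ, hfin, M, rfl⟩ := h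
  have hsub : Set.range (lquot M.accepts) ⊆ Set.range M.acceptsFrom := by
    rintro _ ⟨w, rfl⟩
    refine ⟨M.eval w, ?_⟩
    ext v
    simp only [lquot, Set.mem_setOf_eq, DFA.mem_acceptsFrom, DFA.mem_accepts, DFA.eval,
      DFA.evalFrom_of_append]
    exact Iff.rfl
  exact (Set.finite_range _).subset hsub

end Lang

/-! ### Arithmetic of words -/

variable {Γ : Type*} [AddCommGroup Γ] (F : AddMonoid.End Γ)

@[simp] lemma wordVal_nil : wordVal F [] = 0 := rfl

@[simp] lemma wordVal_cons (x : Γ) (xs : List Γ) :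
    wordVal F (x :: xs) = x + F (wordVal F xs) := rfl

lemma pow_apply_succ (n : ℕ) (x : Γ) : (F ^ (n+1)) x = F ((F ^ n) x) := by
  rw [pow_succ']; rfl

lemma wordVal_append (a b : List Γ) :
    wordVal F (a ++ b) = wordVal F a + (F ^ a.length) (wordVal F b) := by
  induction a with
  | nil => simp
  | cons x xs ih =>
    simp only [List.cons_append, wordVal_cons, ih, map_add, List.length_cons,
      pow_apply_succ, add_assoc]

lemma wordVal_replicate_zero (n : ℕ) : wordVal F (List.replicate n 0) = 0 := by
  induction n with
  | zero => simp
  | succ n ih => simp [List.replicate_succ, ih]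

lemma wordVal_pad (w : List Γ) (n : ℕ) :
    wordVal F (w ++ List.replicate n 0) = wordVal F w := by
  rw [wordVal_append, wordVal_replicate_zero, map_zero, add_zero]

lemma wordVal_headD (a : List Γ) :
    wordVal F a = a.headD 0 + F (wordVal F a.tail) := by
  cases a <;> simp

variable (Sig : Set Γ)

set_option linter.unusedSectionVars false

lemma finite_words (hfin : Sig.Finite) :
    ∀ n : ℕ, {w : List Γ | (∀ x ∈ w, x ∈ Sig) ∧ w.length = n}.Finite := by
  intro n
  induction n with
  | zero =>
    refine (Set.finite_singleton ([] : List Γ)).subset ?_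
    rintro w ⟨hw, hlen⟩
    simp [List.length_eq_zero_iff.mp hlen]
  | succ n ih =>
    refine ((hfin.prod ih).image (fun p : Γ × List Γ => p.1 :: p.2)).subset ?_
    rintro w ⟨hw, hlen⟩
    cases w with
    | nil => simp at hlen
    | cons x xs =>
      refine ⟨(x, xs), ⟨hw x (by simp), fun y hy => hw y (List.mem_cons_of_mem _ hy),
        by simpa using hlen⟩, rfl⟩

/-- injectivity of `T ↦ L_T`, given that every group element is a word value. -/
lemma lang_inj (A : Set Γ)
    (hspan : ∀ x : Γ, ∃ w : List Γ, (∀ y ∈ w, y ∈ A) ∧ wordVal F w = x) (T T' : Set Γ)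
    (h : {w : List ↥A | wordVal F (w.map Subtype.val) ∈ T}
       = {w : List ↥A | wordVal F (w.map Subtype.val) ∈ T'}) : T = T' := by
  ext x
  obtain ⟨w, hw, hwval⟩ := hspan x
  set w' : List ↥A := w.attach.map (fun y => ⟨y.1, hw y.1 y.2⟩) with hw'
  have hmap : w'.map Subtype.val = w := by
    simp [hw', List.map_map, Function.comp]
  have h1 : (w' ∈ {w : List ↥A | wordVal F (w.map Subtype.val) ∈ T})
      ↔ (w' ∈ {w : List ↥A | wordVal F (w.map Subtype.val) ∈ T'}) := by rw [h]
  simp only [Set.mem_setOf_eq] at h1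
  rw [hmap, hwval] at h1
  exact h1

/-- sums of three elements of `Sig` have the form `t + F t'`. -/
lemma p5 (h0 : (0:Γ) ∈ Sig)
    (h5 : ∀ x₁ ∈ Sig, ∀ x₂ ∈ Sig, ∀ x₃ ∈ Sig, ∀ x₄ ∈ Sig, ∀ x₅ ∈ Sig,
      ∃ t ∈ Sig, ∃ t' ∈ Sig, x₁ + x₂ + x₃ + x₄ + x₅ = t + F t')
    (a b c : Γ) (ha : a ∈ Sig) (hb : b ∈ Sig) (hc : c ∈ Sig) :
    ∃ t ∈ Sig, ∃ t' ∈ Sig, a + b + c = t + F t' := by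
  obtain ⟨t, ht, t', ht', h⟩ := h5 a ha b hb c hc 0 h0 0 h0
  exact ⟨t, ht, t', ht', by rw [← h]; abel⟩

/-- consume `n` digits from the sum of a carry and two words. -/
lemma consume (h0 : (0:Γ) ∈ Sig)
    (h5 : ∀ x₁ ∈ Sig, ∀ x₂ ∈ Sig, ∀ x₃ ∈ Sig, ∀ x₄ ∈ Sig, ∀ x₅ ∈ Sig,
      ∃ t ∈ Sig, ∃ t' ∈ Sig, x₁ + x₂ + x₃ + x₄ + x₅ = t + F t') :
    ∀ (n : ℕ) (a b : List Γ), (∀ x ∈ a, x ∈ Sig) → (∀ x ∈ b, x ∈ Sig) →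
    ∀ c ∈ Sig, ∃ w : List Γ, (∀ x ∈ w, x ∈ Sig) ∧ w.length = n ∧
      ∃ c' ∈ Sig, c + wordVal F a + wordVal F b
        = wordVal F w + (F ^ n) (c' + wordVal F (a.drop n) + wordVal F (b.drop n)) := by
  intro n
  induction n with
  | zero =>
    intro a b ha hb c hc
    exact ⟨[], by simp, rfl, c, hc, by simp⟩
  | succ n ih =>
    intro a b ha hb c hc
    have hah : a.headD 0 ∈ Sig := by cases a with
      | nil => simpa using h0
      | cons x xs => exact ha x (by simp)
    have hbh : b.headD 0 ∈ Sig := by cases b with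
      | nil => simpa using h0
      | cons x xs => exact hb x (by simp)
    have hat : ∀ x ∈ a.tail, x ∈ Sig := fun x hx => ha x (List.mem_of_mem_tail hx)
    have hbt : ∀ x ∈ b.tail, x ∈ Sig := fun x hx => hb x (List.mem_of_mem_tail hx)
    obtain ⟨t, ht, t', ht', hsum⟩ := p5 F Sig h0 h5 c (a.headD 0) (b.headD 0) hc hah hbh
    obtain ⟨w', hw', hw'len, c', hc', heq⟩ := ih a.tail b.tail hat hbt t' ht'
    refine ⟨t :: w', ?_, by simp [hw'len], c', hc', ?_⟩
    · intro x hx; rcases List.mem_cons.1 hx with h | h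
      · exact h ▸ ht
      · exact hw' x h
    · have hdropa : a.drop (n+1) = a.tail.drop n := by cases a <;> simp
      have hdropb : b.drop (n+1) = b.tail.drop n := by cases b <;> simp
      rw [hdropa, hdropb, wordVal_cons, pow_apply_succ]
      calc c + wordVal F a + wordVal F b
          = (c + a.headD 0 + b.headD 0) + F (wordVal F a.tail + wordVal F b.tail) := by
            rw [wordVal_headD F a, wordVal_headD F b, map_add]; abel
        _ = t + F (t' + wordVal F a.tail + wordVal F b.tail) := by
            rw [hsum]; simp only [map_add]; abel
        _ = t + F (wordVal F w' + (F ^ n) (c' + wordVal F (a.tail.drop n)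
              + wordVal F (b.tail.drop n))) := by rw [heq]
        _ = _ := by rw [map_add, ← add_assoc]

/-- turn carry + two short words into a single word of length `m+1`. -/
lemma toWord (h0 : (0:Γ) ∈ Sig)
    (h5 : ∀ x₁ ∈ Sig, ∀ x₂ ∈ Sig, ∀ x₃ ∈ Sig, ∀ x₄ ∈ Sig, ∀ x₅ ∈ Sig,
      ∃ t ∈ Sig, ∃ t' ∈ Sig, x₁ + x₂ + x₃ + x₄ + x₅ = t + F t')
    (m : ℕ) (a b : List Γ) (ha : ∀ x ∈ a, x ∈ Sig) (hb : ∀ x ∈ b, x ∈ Sig)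
    (c : Γ) (hc : c ∈ Sig) (hla : a.length ≤ m) (hlb : b.length ≤ m) :
    ∃ v : List Γ, (∀ x ∈ v, x ∈ Sig) ∧ v.length = m + 1 ∧
      c + wordVal F a + wordVal F b = wordVal F v := by
  obtain ⟨w, hw, hwlen, c', hc', heq⟩ := consume F Sig h0 h5 m a b ha hb c hc
  rw [List.drop_eq_nil_of_le hla, List.drop_eq_nil_of_le hlb] at heq
  refine ⟨w ++ [c'], ?_, by simp [hwlen], ?_⟩
  · intro x hx; rcases List.mem_append.1 hx with h | h
    · exact hw x h
    · simp at h; exact h ▸ hc'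
  · rw [heq, wordVal_append, hwlen]
    simp

/-- the key representation lemma: a word over `Θ` in base `F^r`, plus a short carry word,
is a word over `Sig` in base `F` of controlled length. -/
lemma rep_lemma (h0 : (0:Γ) ∈ Sig)
    (h5 : ∀ x₁ ∈ Sig, ∀ x₂ ∈ Sig, ∀ x₃ ∈ Sig, ∀ x₄ ∈ Sig, ∀ x₅ ∈ Sig,
      ∃ t ∈ Sig, ∃ t' ∈ Sig, x₁ + x₂ + x₃ + x₄ + x₅ = t + F t')
    (r cm : ℕ) (hr : 0 < r) (Θ : Set Γ)
    (hrep : ∀ y ∈ Θ, ∃ w : List Γ, (∀ x ∈ w, x ∈ Sig) ∧ w.length ≤ cm ∧ wordVal F w = y) :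
    ∀ (u : List Γ), (∀ y ∈ u, y ∈ Θ) → ∀ v : List Γ, (∀ x ∈ v, x ∈ Sig) →
      v.length ≤ cm + 1 →
      ∃ w : List Γ, (∀ x ∈ w, x ∈ Sig) ∧ w.length = r * u.length + (cm + 1) ∧
        wordVal F v + wordVal (F ^ r) u = wordVal F w := by
  intro u
  induction u with
  | nil =>
    intro _ v hv hvlen
    refine ⟨v ++ List.replicate (cm + 1 - v.length) 0, ?_, ?_, ?_⟩
    · intro x hx
      rcases List.mem_append.1 hx with h | h
      · exact hv x h
      · rw [List.eq_of_mem_replicate h]; exact h0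
    · simp only [List.length_append, List.length_replicate, List.length_nil]
      omega
    · rw [wordVal_pad]; simp
  | cons y u' ih =>
    intro hu v hv hvlen
    obtain ⟨wy, hwy, hwylen, hwyval⟩ := hrep y (hu y (by simp))
    obtain ⟨w₁, hw₁, hw₁len, c', hc', heq⟩ := consume F Sig h0 h5 r v wy hv hwy 0 h0
    have hdv : (v.drop r).length ≤ cm := by
      rw [List.length_drop]; omega
    have hdw : (wy.drop r).length ≤ cm := by
      rw [List.length_drop]; omega
    obtain ⟨v', hv', hv'len, hv'val⟩ := toWord F Sig h0 h5 cm (v.drop r) (wy.drop r)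
      (fun x hx => hv x (List.mem_of_mem_drop hx))
      (fun x hx => hwy x (List.mem_of_mem_drop hx)) c' hc' hdv hdw
    obtain ⟨w', hw', hw'len, hw'val⟩ := ih (fun z hz => hu z (List.mem_cons_of_mem _ hz))
      v' hv' (le_of_eq hv'len)
    refine ⟨w₁ ++ w', ?_, ?_, ?_⟩
    · intro x hx
      rcases List.mem_append.1 hx with h | h
      · exact hw₁ x h
      · exact hw' x h
    · rw [List.length_append, hw₁len, hw'len, List.length_cons, Nat.mul_succ]
      ring
    · have hkey : wordVal F v + y = wordVal F w₁ + (F ^ r) (wordVal F v') := by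
        rw [← hwyval, ← hv'val, ← heq]
        abel
      calc wordVal F v + wordVal (F ^ r) (y :: u')
          = (wordVal F v + y) + (F ^ r) (wordVal (F ^ r) u') := by
            rw [wordVal_cons]; abel
        _ = (wordVal F w₁ + (F ^ r) (wordVal F v')) + (F ^ r) (wordVal (F ^ r) u') := by
            rw [hkey]
        _ = wordVal F w₁ + (F ^ r) (wordVal F v' + wordVal (F ^ r) u') := by
            rw [map_add, add_assoc]
        _ = wordVal F w₁ + (F ^ r) (wordVal F w') := by rw [hw'val]
        _ = wordVal F (w₁ ++ w') := by rw [wordVal_append, hw₁len]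

end SFAux

/-- If `Σ` is an `F`-spanning set, `Θ` is an `F^r`-spanning set for
some `r > 0`, and `S ⊆ Γ` is `(Σ,F)`-automatic, then `S` is `(Θ,F^r)`-automatic.
In particular, `(Σ,F)`-automaticity does not depend on the choice of `Σ`. -/
theorem isSFAutomatic_of_isSFAutomatic {Γ : Type*} [AddCommGroup Γ]
    (F : AddMonoid.End Γ) (Sig Θ : Set Γ) (r : ℕ) (hr : 0 < r)
    (hSig : IsSpanningSet F Sig) (hΘ : IsSpanningSet (F ^ r) Θ) (S : Set Γ)
    (hS : IsSFAutomatic F Sig S) : IsSFAutomatic (F ^ r) Θ S := by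
  classical
  obtain ⟨hSfin, h0, hneg, hF, hspan, h5, hdiv⟩ := hSig
  obtain ⟨hΘfin, h0Θ, -, -, hspanΘ, -, -⟩ := hΘ
  -- uniform bound for representations of elements of Θ
  choose rep hrepOk hrepVal using hspan
  set cm := hΘfin.toFinset.sup (fun y => (rep y).length) with hcm
  have hrep : ∀ y ∈ Θ, ∃ w : List Γ, (∀ x ∈ w, x ∈ Sig) ∧ w.length ≤ cm ∧ wordVal F w = y :=
    fun y hy => ⟨rep y, hrepOk y,
      Finset.le_sup (f := fun y => (rep y).length) (hΘfin.mem_toFinset.mpr hy), hrepVal y⟩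
  -- the family of "derivative" sets
  set Q : ℕ → Γ → Set Γ := fun n g => {x | g + (F ^ n) x ∈ S} with hQdef
  set Lang : Set Γ → Language ↥Sig :=
    fun T => {w : List ↥Sig | wordVal F (w.map Subtype.val) ∈ T} with hLang
  set LangΘ : Set Γ → Language ↥Θ :=
    fun T => {w : List ↥Θ | wordVal (F ^ r) (w.map Subtype.val) ∈ T} with hLangΘ
  set val : List ↥Sig → Γ := fun w => wordVal F (w.map Subtype.val) with hvaldef
  set valΘ : List ↥Θ → Γ := fun w => wordVal (F ^ r) (w.map Subtype.val) with hvalΘdef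
  -- left quotients of the Σ-language
  have hquot : ∀ w : List ↥Sig, SFAux.lquot (Lang S) w = Lang (Q w.length (val w)) := by
    intro w
    ext v
    show wordVal F ((w ++ v).map Subtype.val) ∈ S ↔ _
    rw [List.map_append, SFAux.wordVal_append, List.length_map]
    exact Iff.rfl
  -- finiteness of the Σ-derivative sets
  have hfinq : (Set.range (fun w : List ↥Sig => Q w.length (val w))).Finite := by
    have h1 : (Set.range (SFAux.lquot (Lang S))).Finite := SFAux.finite_of_regular hS
    have h2 : Lang '' (Set.range fun w : List ↥Sig => Q w.length (val w))
        ⊆ Set.range (SFAux.lquot (Lang S)) := by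
      rintro _ ⟨_, ⟨w, rfl⟩, rfl⟩
      exact ⟨w, hquot w⟩
    exact Set.Finite.of_finite_image (h1.subset h2)
      (fun T _ T' _ h => SFAux.lang_inj F Sig (fun x => ⟨rep x, hrepOk x, hrepVal x⟩) T T' h)
  -- the finite collection of translates
  set V : Set Γ := {g : Γ | ∃ w₂ : List Γ, (∀ x ∈ w₂, x ∈ Sig) ∧ w₂.length = cm + 1 ∧
    wordVal F w₂ = g} with hV
  have hVfin : V.Finite := by
    refine ((SFAux.finite_words Sig hSfin (cm + 1)).image (wordVal F)).subset ?_
    rintro g ⟨w₂, hok, hlen, rfl⟩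
    exact ⟨w₂, ⟨hok, hlen⟩, rfl⟩
  -- left quotients of the Θ-language
  have hquotΘ : ∀ u : List ↥Θ, SFAux.lquot (LangΘ S) u
      = LangΘ (Q (r * u.length) (valΘ u)) := by
    intro u
    ext v
    show wordVal (F ^ r) ((u ++ v).map Subtype.val) ∈ S ↔ _
    rw [List.map_append, SFAux.wordVal_append, List.length_map]
    show valΘ u + ((F ^ r) ^ u.length) (valΘ v) ∈ S ↔ _
    rw [← pow_mul]
    exact Iff.rfl
  -- every Θ-derivative set is a translate of a Σ-derivative set
  have hT : ∀ u : List ↥Θ, ∃ T ∈ Set.range (fun w : List ↥Sig => Q w.length (val w)),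
      ∃ g ∈ V, Q (r * u.length) (valΘ u) = {x | g + x ∈ T} := by
    intro u
    have huΓ : ∀ y ∈ u.map (Subtype.val : ↥Θ → Γ), y ∈ Θ := by
      intro y hy
      obtain ⟨z, _, rfl⟩ := List.mem_map.1 hy
      exact z.2
    obtain ⟨w, hwOk, hwlen, hwval⟩ := SFAux.rep_lemma F Sig h0 h5 r cm hr Θ hrep
      (u.map Subtype.val) huΓ [] (by simp) (by simp)
    rw [SFAux.wordVal_nil, zero_add] at hwval
    rw [List.length_map] at hwlen
    set k := u.length with hk
    set w₁ := w.take (r * k) with hw₁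
    set w₂ := w.drop (r * k) with hw₂
    have hlen1 : w₁.length = r * k := by
      rw [hw₁, List.length_take]; omega
    have hlen2 : w₂.length = cm + 1 := by
      rw [hw₂, List.length_drop]; omega
    -- lift w₁ over the subtype
    set w₁' : List ↥Sig := w₁.attach.map
      (fun y => ⟨y.1, hwOk y.1 (List.mem_of_mem_take y.2)⟩) with hw₁'
    have hmap1 : w₁'.map Subtype.val = w₁ := by
      simp [hw₁', List.map_map, Function.comp]
    have hlen1' : w₁'.length = r * k := by
      rw [hw₁', List.length_map, List.length_attach, hlen1]
    refine ⟨Q (r * k) (wordVal F w₁), ⟨w₁', ?_⟩, wordVal F w₂,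
      ⟨w₂, fun x hx => hwOk x (List.mem_of_mem_drop hx), hlen2, rfl⟩, ?_⟩
    · show Q w₁'.length (val w₁') = Q (r * k) (wordVal F w₁)
      have hv1 : val w₁' = wordVal F w₁ := by
        show wordVal F (w₁'.map Subtype.val) = wordVal F w₁
        rw [hmap1]
      rw [hlen1', hv1]
    · ext x
      show valΘ u + (F ^ (r * k)) x ∈ S ↔ wordVal F w₂ + x ∈ Q (r * k) (wordVal F w₁)
      have hsplit : valΘ u = wordVal F w₁ + (F ^ (r * k)) (wordVal F w₂) := by
        show wordVal (F ^ r) (u.map Subtype.val) = _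
        have hw12 : w = w₁ ++ w₂ := (List.take_append_drop (r * k) w).symm
        rw [hwval, hw12, SFAux.wordVal_append, hlen1]
      rw [hsplit]
      show wordVal F w₁ + (F ^ (r*k)) (wordVal F w₂) + (F ^ (r*k)) x ∈ S
        ↔ wordVal F w₁ + (F ^ (r*k)) (wordVal F w₂ + x) ∈ S
      rw [map_add, add_assoc]
  -- assemble: the Θ-language has finitely many left quotients
  show Language.IsRegular (LangΘ S)
  apply SFAux.regular_of_finite
  have hTfin : ((fun p : (Set Γ) × Γ => {x | p.2 + x ∈ p.1}) ''
      ((Set.range (fun w : List ↥Sig => Q w.length (val w))) ×ˢ V)).Finite :=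
    (hfinq.prod hVfin).image _
  refine ((hTfin.image LangΘ).subset ?_)
  rintro _ ⟨u, rfl⟩
  rw [hquotΘ u]
  obtain ⟨T, hTr, g, hgV, hEq⟩ := hT u
  exact ⟨{x | g + x ∈ T}, ⟨(T, g), ⟨hTr, hgV⟩, rfl⟩, by rw [hEq]⟩
end

section
/- Suppose F is injective and Σ is an F-spanning set for Γ. Then the language over the alphabet Σ × Σ consisting of all words (x_0,y_0)(x_1,y_1)⋯(x_{n−1},y_{n−1}) such that [x_0⋯x_{n−1}]_F = [y_0⋯y_{n−1}]_F is regular. (Equivalently, the equivalence relation w ∼ u on Σ*, defined by length(w) = length(u) and [w]_F = [u]_F, is a regular subset of (Σ×Σ)*.) -/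
/-!
Read the pair of words letter by letter, keeping a carry `c`. For `w = (x, y) w'`, injectivity
of `F` gives `c + [u]_F - [v]_F = 0` iff `c + x - y = F t` with `t + [u']_F - [v']_F = 0`.
Condition (v), applied to `c, x, -y`, says that such a `t` can always be taken in `Σ` when it
exists at all. So the finitely many carries in `Σ`, plus a dead state, form a finite automaton
that accepts from carry `0` exactly the pairs of words of equal value.
-/

open Pointwise

section

variable {Γ : Type*} [AddCommGroup Γ] (F : AddMonoid.End Γ) (S : Set Γ)

def wordDiff (w : List (S × S)) : Γ :=
  wordVal F (w.map fun p => (p.1 : Γ)) - wordVal F (w.map fun p => (p.2 : Γ))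

lemma wordDiff_nil : wordDiff F S [] = 0 := sub_self 0

lemma wordDiff_cons (p : S × S) (w : List (S × S)) :
    wordDiff F S (p :: w) = p.1 - p.2 + F (wordDiff F S w) := by
  simp only [wordDiff, List.map_cons, wordVal, map_sub]
  abel

def HasCarries : Prop :=
  ∀ c ∈ S, ∀ x ∈ S, ∀ y ∈ S, c + x - y ∈ Set.range F → ∃ t ∈ S, F t = c + x - y

open Classical in
noncomputable def carryStep (c : S) (p : S × S) : Option S :=
  if h : ∃ t ∈ S, F t = c + p.1 - p.2 then some ⟨h.choose, h.choose_spec.1⟩ else none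

noncomputable def carryDFA (h0 : (0 : Γ) ∈ S) : DFA (S × S) (Option S) where
  step s p := s.bind (carryStep F S · p)
  start := some ⟨0, h0⟩
  accept := {some ⟨0, h0⟩}

variable {F S}

lemma carryStep_eq_some {c : S} {p : S × S} {t : S} (h : carryStep F S c p = some t) :
    F t = c + p.1 - p.2 := by
  unfold carryStep at h
  split_ifs at h with hex
  cases h
  exact hex.choose_spec.2

lemma carryStep_eq_none {c : S} {p : S × S} (h : carryStep F S c p = none) :
    ∀ t ∈ S, F t ≠ c + p.1 - p.2 := by
  unfold carryStep at h
  split_ifs at h with hex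
  push Not at hex
  exact hex

lemma carryDFA_evalFrom_none (h0 : (0 : Γ) ∈ S) (w : List (S × S)) :
    (carryDFA F S h0).evalFrom none w = none := by
  induction w with
  | nil => rfl
  | cons p w ih => exact ih

lemma carryDFA_evalFrom_eq_zero_iff (hF : Function.Injective F) (h0 : (0 : Γ) ∈ S)
    (hcarry : HasCarries F S) (w : List (S × S)) (c : S) :
    (carryDFA F S h0).evalFrom (some c) w = some ⟨0, h0⟩ ↔ (c : Γ) + wordDiff F S w = 0 := by
  induction w generalizing c with
  | nil => simp [wordDiff_nil, Subtype.ext_iff]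
  | cons p w ih =>
    have hval : (c : Γ) + wordDiff F S (p :: w) = (c + p.1 - p.2) + F (wordDiff F S w) := by
      rw [wordDiff_cons]
      abel
    rw [DFA.evalFrom_cons, hval]
    cases hstep : carryStep F S c p with
    | some t =>
      have hstep' : (carryDFA F S h0).step (some c) p = some t := hstep
      rw [hstep', ih, ← carryStep_eq_some hstep, ← map_add, map_eq_zero_iff F hF]
    | none =>
      have hstep' : (carryDFA F S h0).step (some c) p = none := hstep
      rw [hstep', carryDFA_evalFrom_none]
      refine ⟨nofun, fun hzero => ?_⟩
      have hdiv : (c : Γ) + p.1 - p.2 = F (-wordDiff F S w) := by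
        rw [map_neg]
        exact eq_neg_of_add_eq_zero_left hzero
      obtain ⟨t, ht, hFt⟩ := hcarry c c.2 p.1 p.1.2 p.2 p.2.2 ⟨_, hdiv.symm⟩
      exact (carryStep_eq_none hstep t ht hFt).elim

lemma carryDFA_accepts (hF : Function.Injective F) (h0 : (0 : Γ) ∈ S)
    (hcarry : HasCarries F S) :
    (carryDFA F S h0).accepts = {w | wordDiff F S w = 0} := by
  ext w
  change _ = _ ↔ wordDiff F S w = 0
  rw [← zero_add (wordDiff F S w)]
  exact carryDFA_evalFrom_eq_zero_iff hF h0 hcarry w ⟨0, h0⟩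

lemma IsSpanningSet.hasCarries (hS : IsSpanningSet F S) : HasCarries F S := by
  obtain ⟨-, -, hneg, -, -, -, hdiv⟩ := hS
  rintro c hc x hx y hy ⟨z, hz⟩
  obtain ⟨t, ht, hFt⟩ := hdiv c hc x hx (-y) (hneg y hy) ⟨z, by rw [hz, sub_eq_add_neg]⟩
  exact ⟨t, ht, by rw [← hFt, sub_eq_add_neg]⟩

end

/-- If `F` is injective and `Σ` is an `F`-spanning set for `Γ`, then
the language over `Σ × Σ` of pairs of words of the same length having equal base-`F`
values is regular. -/
theorem eq_wordVal_lang_regular {Γ : Type*} [AddCommGroup Γ] (F : AddMonoid.End Γ)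
    (hF : Function.Injective ⇑F) (Sig : Set Γ) (hSig : IsSpanningSet F Sig) :
    Language.IsRegular {w : List (↥Sig × ↥Sig) |
      wordVal F (w.map fun p => (p.1 : Γ)) = wordVal F (w.map fun p => (p.2 : Γ))} := by
  have : Fintype Sig := hSig.1.fintype
  refine Language.isRegular_iff.2 ⟨_, inferInstance, carryDFA F Sig hSig.2.1, ?_⟩
  rw [carryDFA_accepts hF hSig.2.1 hSig.hasCarries]
  ext w
  exact sub_eq_zero
end

section
/- Suppose r > 0 is an integer, Σ is an F^r-spanning set for Γ, and 𝓛 ⊆ Σ* is a regular language. Then the set {[u]_{F^r} : u ∈ 𝓛} is (Σ,F^r)-automatic, provided F is injective. -/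
open Pointwise

/-!
A word `w` has the value of some `u ∈ L` iff an automaton reading `w` can guess `u` letter by
letter, with `u` padded by zeros so that it is at least as long as `w`, while keeping the carry `c`
defined by `Fʳⁿ c = [u₀ ⋯ u_{n-1}] - [w₀ ⋯ w_{n-1}]`. Conditions (ii) and (iv) keep the carry in
the finite set `Σ + Σ`: if `s = a + b` and `s + x - y = Fʳ c`, write `a + b + x - y = t + Fʳ t'`;
then `t = Fʳ (c - t')`, so `c - t' ∈ Σ` and `c ∈ Σ + Σ`. The automaton is therefore finite.
-/

section WordVal

variable {Γ : Type*} [AddCommGroup Γ] (G : AddMonoid.End Γ)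

@[simp]
theorem wordVal_nil : wordVal G [] = 0 := rfl

@[simp]
theorem wordVal_cons (x : Γ) (xs : List Γ) : wordVal G (x :: xs) = x + G (wordVal G xs) := rfl

theorem wordVal_append_s16 (a b : List Γ) :
    wordVal G (a ++ b) = wordVal G a + (G ^ a.length) (wordVal G b) := by
  induction a with
  | nil => simp
  | cons x xs ih =>
    simp only [List.cons_append, wordVal_cons, ih, map_add, List.length_cons, pow_succ',
      AddMonoid.End.coe_mul, Function.comp_apply]
    abel

@[simp]
theorem wordVal_replicate_zero_s16 (k : ℕ) : wordVal G (List.replicate k 0) = 0 := by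
  induction k with
  | zero => rfl
  | succ k ih => simp [List.replicate_succ, ih]

end WordVal

theorem NFA.mem_acceptsFrom_iff_exists {α σ : Type*} {M : NFA α σ} {S : Set σ} {x : List α} :
    x ∈ M.acceptsFrom S ↔ ∃ s ∈ S, x ∈ M.acceptsFrom {s} := by
  simp only [NFA.mem_acceptsFrom, NFA.mem_evalFrom_iff_exists (S := S)]
  grind

theorem NFA.isRegular_accepts {α σ : Type*} [Finite σ] (M : NFA α σ) : M.accepts.IsRegular := by
  classical
  have := Fintype.ofFinite σ
  exact Language.isRegular_iff.mpr ⟨Set σ, inferInstance, M.toDFA, M.toDFA_correct⟩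

namespace DFA

variable {α σ : Type*} (M : DFA α σ) (z : α)

def padRight : NFA α (Option σ) where
  step
    | some q, a => {p | p = some (M.step q a) ∨ p = none ∧ q ∈ M.accept ∧ a = z}
    | none, a => {p | p = none ∧ a = z}
  start := {some M.start}
  accept := insert none (some '' M.accept)

variable {M z}

@[simp]
theorem mem_padRight_step_some {q : σ} {a : α} {p : Option σ} :
    p ∈ (M.padRight z).step (some q) a ↔ p = some (M.step q a) ∨ p = none ∧ q ∈ M.accept ∧ a = z :=
  Iff.rfl

@[simp]
theorem mem_padRight_step_none {a : α} {p : Option σ} :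
    p ∈ (M.padRight z).step none a ↔ p = none ∧ a = z :=
  Iff.rfl

theorem mem_acceptsFrom_padRight_none {x : List α} :
    x ∈ (M.padRight z).acceptsFrom {none} ↔ ∀ a ∈ x, a = z := by
  induction x with
  | nil => simp [padRight]
  | cons a x ih =>
    rw [NFA.cons_mem_acceptsFrom, NFA.stepSet_singleton, NFA.mem_acceptsFrom_iff_exists]
    simp [ih, and_comm]

theorem mem_acceptsFrom_padRight_some {q : σ} {x : List α} :
    x ∈ (M.padRight z).acceptsFrom {some q} ↔
      ∃ u v, x = u ++ v ∧ M.evalFrom q u ∈ M.accept ∧ ∀ a ∈ v, a = z := by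
  induction x generalizing q with
  | nil => simp [padRight]
  | cons a x ih =>
    rw [NFA.cons_mem_acceptsFrom, NFA.stepSet_singleton, NFA.mem_acceptsFrom_iff_exists]
    simp only [mem_padRight_step_some, exists_eq_or_imp, ih, ↓existsAndEq, true_and,
      mem_acceptsFrom_padRight_none, List.cons_eq_append_iff]
    constructor
    · rintro (⟨u, v, rfl, hu, hv⟩ | ⟨⟨hq, rfl⟩, hx⟩)
      · exact ⟨a :: u, v, .inr ⟨u, rfl, rfl⟩, hu, hv⟩
      · exact ⟨[], a :: x, .inl ⟨rfl, rfl⟩, hq, by simpa using hx⟩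
    · rintro ⟨u, v, ⟨rfl, rfl⟩ | ⟨u, rfl, rfl⟩, hu, hv⟩
      · simp only [List.forall_mem_cons] at hv
        exact .inr ⟨⟨hu, hv.1⟩, hv.2⟩
      · exact .inl ⟨u, v, rfl, hu, hv⟩

theorem mem_accepts_padRight {x : List α} :
    x ∈ (M.padRight z).accepts ↔ ∃ u ∈ M.accepts, ∃ k, x = u ++ List.replicate k z := by
  change x ∈ (M.padRight z).acceptsFrom {some M.start} ↔ _
  rw [mem_acceptsFrom_padRight_some]
  constructor
  · rintro ⟨u, v, rfl, hu, hv⟩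
    exact ⟨u, hu, v.length, by rw [← List.eq_replicate_iff.2 ⟨rfl, hv⟩]⟩
  · rintro ⟨u, hu, k, rfl⟩
    exact ⟨u, _, rfl, hu, fun _ ↦ List.eq_of_mem_replicate⟩

end DFA

section Carry

variable {Γ : Type*} [AddCommGroup Γ] (G : AddMonoid.End Γ) {Sig : Set Γ}

theorem carry_mem_add_self (h0 : (0 : Γ) ∈ Sig) (hneg : ∀ x ∈ Sig, -x ∈ Sig)
    (hdiv : ∀ x : Γ, G x ∈ Sig → x ∈ Sig)
    (h5 : ∀ x₁ ∈ Sig, ∀ x₂ ∈ Sig, ∀ x₃ ∈ Sig, ∀ x₄ ∈ Sig, ∀ x₅ ∈ Sig,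
      ∃ t ∈ Sig, ∃ t' ∈ Sig, x₁ + x₂ + x₃ + x₄ + x₅ = t + G t')
    {s x y c : Γ} (hs : s ∈ Sig + Sig) (hx : x ∈ Sig) (hy : y ∈ Sig) (h : s + x - y = G c) :
    c ∈ Sig + Sig := by
  obtain ⟨a, ha, b, hb, rfl⟩ := Set.mem_add.1 hs
  obtain ⟨t, ht, t', ht', htt'⟩ := h5 a ha b hb x hx (-y) (hneg y hy) 0 h0
  have ht_eq : t = G (c - t') := by
    rw [map_sub, ← h, eq_sub_iff_add_eq, ← htt']
    abel
  exact ⟨c - t', hdiv _ (ht_eq ▸ ht), t', ht', sub_add_cancel c t'⟩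

variable {σ : Type*}

/-- A state pairs a state of `P` on a guessed word `u` with a carry `c`: after reading `n` letters
of `w`, `G ^ n c = [u₀ ⋯ u_{n-1}] - [w₀ ⋯ w_{n-1}]`. The guessed word may outlast `w`, which
the acceptance condition allows for. -/
def carryNFA (P : NFA ↥Sig σ) (C : Set Γ) : NFA ↥Sig (σ × C) where
  step p y := {p' | ∃ x : ↥Sig, p'.1 ∈ P.step p.1 x ∧ (p.2 : Γ) + x - y = G p'.2}
  start := {p | p.1 ∈ P.start ∧ (p.2 : Γ) = 0}
  accept := {p | ∃ v ∈ P.acceptsFrom {p.1}, (p.2 : Γ) + wordVal G (v.map (↑)) = 0}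

variable {G} {P : NFA ↥Sig σ} {C : Set Γ}

theorem mem_evalFrom_carryNFA
    (hC : ∀ s ∈ C, ∀ x ∈ Sig, ∀ y ∈ Sig, ∀ c, s + x - y = G c → c ∈ C)
    {p p' : σ} {c : C} {c' : Γ} {w : List ↥Sig} :
    (∃ hc' : c' ∈ C, (p', ⟨c', hc'⟩) ∈ (carryNFA G P C).evalFrom {(p, c)} w) ↔
      ∃ x : List ↥Sig, x.length = w.length ∧ p' ∈ P.evalFrom {p} x ∧
        (c : Γ) + wordVal G (x.map (↑)) = wordVal G (w.map (↑)) + (G ^ w.length) c' := by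
  induction w generalizing p c with
  | nil =>
    constructor
    · rintro ⟨hc', h⟩
      simp only [NFA.evalFrom_nil, Set.mem_singleton_iff, Prod.mk.injEq] at h
      obtain ⟨rfl, rfl⟩ := h
      exact ⟨[], rfl, rfl, by simp⟩
    · rintro ⟨x, hx, hp', h⟩
      obtain rfl := List.length_eq_zero_iff.1 hx
      obtain rfl : c' = c := by simpa using h.symm
      exact ⟨c.2, by simpa using hp'⟩
  | cons y w ih =>
    simp only [NFA.evalFrom_cons, NFA.stepSet_singleton]
    constructor
    · rintro ⟨hc', h⟩
      obtain ⟨⟨q, d⟩, ⟨a, hq, hd⟩, h⟩ := NFA.mem_evalFrom_iff_exists.1 h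
      obtain ⟨x, hx, hp', heq⟩ := ih.1 ⟨hc', h⟩
      refine ⟨a :: x, by simp [hx], ?_, ?_⟩
      · rw [NFA.evalFrom_cons, NFA.stepSet_singleton]
        exact NFA.mem_evalFrom_iff_exists.2 ⟨q, hq, hp'⟩
      have hG := congrArg G heq
      rw [map_add, map_add] at hG
      simp only [List.map_cons, wordVal_cons, List.length_cons, pow_succ', AddMonoid.End.coe_mul,
        Function.comp_apply]
      linear_combination (norm := module) hd + hG
    · rintro ⟨_ | ⟨a, x⟩, hx, hp', heq⟩
      · simp at hx
      rw [NFA.evalFrom_cons, NFA.stepSet_singleton] at hp'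
      obtain ⟨q, hq, hp'⟩ := NFA.mem_evalFrom_iff_exists.1 hp'
      simp only [List.map_cons, wordVal_cons, List.length_cons, pow_succ', AddMonoid.End.coe_mul,
        Function.comp_apply] at heq
      set d := wordVal G (w.map (↑)) - wordVal G (x.map (↑)) + (G ^ w.length) c'
      have hd : (c : Γ) + a - y = G d := by
        simp only [d, map_add, map_sub]
        linear_combination (norm := module) heq
      have hdC : d ∈ C := hC c c.2 a a.2 y y.2 d hd
      obtain ⟨hc', h⟩ := (ih (c := ⟨d, hdC⟩)).2 ⟨x, by simpa using hx, hp', by simp only [d]; abel⟩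
      exact ⟨hc', NFA.mem_evalFrom_iff_exists.2 ⟨(q, ⟨d, hdC⟩), ⟨a, hq, hd⟩, h⟩⟩

theorem accepts_carryNFA (hC0 : (0 : Γ) ∈ C)
    (hC : ∀ s ∈ C, ∀ x ∈ Sig, ∀ y ∈ Sig, ∀ c, s + x - y = G c → c ∈ C) :
    (carryNFA G P C).accepts = {w | ∃ u ∈ P.accepts, w.length ≤ u.length ∧
      wordVal G (u.map (↑)) = wordVal G (w.map (↑))} := by
  ext w
  constructor
  · rintro ⟨⟨q, e⟩, ⟨v, hv, he⟩, h⟩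
    obtain ⟨⟨p₀, c₀⟩, ⟨hp₀, hc₀ : (c₀ : Γ) = 0⟩, h⟩ := NFA.mem_evalFrom_iff_exists.1 h
    obtain ⟨x, hx, hq, heq⟩ := (mem_evalFrom_carryNFA hC).1 ⟨e.2, h⟩
    refine ⟨x ++ v, ?_, by simp [hx], ?_⟩
    · change x ++ v ∈ P.acceptsFrom P.start
      rw [NFA.append_mem_acceptsFrom, NFA.mem_acceptsFrom_iff_exists]
      exact ⟨q, NFA.mem_evalFrom_iff_exists.2 ⟨p₀, hp₀, hq⟩, hv⟩
    · have hG := congrArg (G ^ w.length) he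
      rw [map_add, map_zero] at hG
      rw [List.map_append, wordVal_append_s16, List.length_map, hx]
      rw [hc₀] at heq
      linear_combination (norm := module) heq + hG
  · rintro ⟨u, hu, hlen, huw⟩
    rw [← List.take_append_drop w.length u] at hu huw
    set x := u.take w.length
    set v := u.drop w.length
    have hx : x.length = w.length := List.length_take_of_le hlen
    change x ++ v ∈ P.acceptsFrom P.start at hu
    rw [NFA.append_mem_acceptsFrom, NFA.mem_acceptsFrom_iff_exists] at hu
    obtain ⟨q, hq, hv⟩ := hu
    obtain ⟨p₀, hp₀, hq⟩ := NFA.mem_evalFrom_iff_exists.1 hq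
    rw [List.map_append, wordVal_append_s16, List.length_map, hx] at huw
    have hcarry : ((⟨0, hC0⟩ : C) : Γ) + wordVal G (x.map (↑)) =
        wordVal G (w.map (↑)) + (G ^ w.length) (-wordVal G (v.map (↑))) := by
      rw [map_neg, ← huw, add_neg_cancel_right]
      exact zero_add _
    obtain ⟨he, h⟩ := (mem_evalFrom_carryNFA hC).2 ⟨x, hx, hq, hcarry⟩
    exact ⟨(q, ⟨_, he⟩), ⟨v, hv, neg_add_cancel _⟩,
      NFA.mem_evalFrom_iff_exists.2 ⟨(p₀, ⟨0, hC0⟩), ⟨hp₀, rfl⟩, h⟩⟩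

end Carry

theorem accepts_carryNFA_padRight {Γ σ : Type*} [AddCommGroup Γ] {G : AddMonoid.End Γ}
    {Sig C : Set Γ} (M : DFA ↥Sig σ) {z : ↥Sig} (hz : (z : Γ) = 0) (hC0 : (0 : Γ) ∈ C)
    (hC : ∀ s ∈ C, ∀ x ∈ Sig, ∀ y ∈ Sig, ∀ c, s + x - y = G c → c ∈ C) :
    (carryNFA G (M.padRight z) C).accepts =
      {w | ∃ u ∈ M.accepts, wordVal G (u.map (↑)) = wordVal G (w.map (↑))} := by
  have hpad (u : List ↥Sig) (k : ℕ) :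
      wordVal G ((u ++ List.replicate k z).map (↑)) = wordVal G (u.map (↑)) := by
    simp only [List.map_append, List.map_replicate, hz, wordVal_append_s16, wordVal_replicate_zero_s16,
      map_zero, add_zero]
  rw [accepts_carryNFA hC0 hC]
  ext w
  constructor
  · rintro ⟨_, hu', -, huw⟩
    obtain ⟨u, hu, k, rfl⟩ := DFA.mem_accepts_padRight.1 hu'
    exact ⟨u, hu, hpad u k ▸ huw⟩
  · rintro ⟨u, hu, huw⟩
    refine ⟨u ++ List.replicate w.length z, DFA.mem_accepts_padRight.2 ⟨u, hu, _, rfl⟩,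
      by simp, (hpad u _).trans huw⟩

theorem isSFAutomatic_image_of_regular_general {Γ : Type*} [AddCommGroup Γ]
    (F : AddMonoid.End Γ) (r : ℕ)
    (Sig : Set Γ) (hSig : IsSpanningSet (F ^ r) Sig)
    (L : Language ↥Sig) (hL : L.IsRegular) :
    IsSFAutomatic (F ^ r) Sig
      {x : Γ | ∃ u ∈ L, wordVal (F ^ r) (u.map Subtype.val) = x} := by
  obtain ⟨hfin, h0, hneg, hdiv, -, h5, -⟩ := hSig
  obtain ⟨σ, _, M, rfl⟩ := hL
  have : Finite ↥(Sig + Sig) := (hfin.add hfin).to_subtype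
  have hC0 : (0 : Γ) ∈ Sig + Sig := ⟨0, h0, 0, h0, add_zero 0⟩
  have hC : ∀ s ∈ Sig + Sig, ∀ x ∈ Sig, ∀ y ∈ Sig, ∀ c, s + x - y = (F ^ r) c → c ∈ Sig + Sig :=
    fun _ hs _ hx _ hy _ h ↦ carry_mem_add_self _ h0 hneg hdiv h5 hs hx hy h
  have hK := (carryNFA (F ^ r) (M.padRight ⟨0, h0⟩) (Sig + Sig)).isRegular_accepts
  rwa [accepts_carryNFA_padRight M rfl hC0 hC] at hK

/-- If `r > 0`, `Σ` is an `F^r`-spanning set for `Γ`, `F` is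
injective, and `𝓛 ⊆ Σ*` is a regular language, then `{[u]_{F^r} : u ∈ 𝓛}` is
`(Σ,F^r)`-automatic. -/
theorem isSFAutomatic_image_of_regular {Γ : Type*} [AddCommGroup Γ]
    (F : AddMonoid.End Γ) (hF : Function.Injective ⇑F) (r : ℕ) (hr : 0 < r)
    (Sig : Set Γ) (hSig : IsSpanningSet (F ^ r) Sig)
    (L : Language ↥Sig) (hL : L.IsRegular) :
    IsSFAutomatic (F ^ r) Sig
      {x : Γ | ∃ u ∈ L, wordVal (F ^ r) (u.map Subtype.val) = x} :=
  isSFAutomatic_image_of_regular_general F r Sig hSig L hL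
end

section
/- Let 𝓛 be a regular language over a finite alphabet Σ and let f_𝓛(n) := #{w ∈ 𝓛 : length(w) ≤ n}. The following are equivalent: (1) f_𝓛(n) = O(n^d) for some natural number d; (2) f_𝓛(n) = o(C^n) for every real C > 1; (3) there do not exist words u, v, a, b over Σ with a and b nonempty, of the same length, and a ≠ b, such that u{a,b}*v ⊆ 𝓛; (4) 𝓛 is a finite union of languages of the form v_1 w_1* v_2 w_2* ⋯ v_k w_k* v_{k+1}, where k ≥ 0, the v_i are possibly empty words and the w_i are nonempty words over Σ. -/
open Filter Asymptotics

/-- `f_𝓛(n)`: the number of words in `𝓛` of length at most `n`. -/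
noncomputable def langCount {α : Type*} (L : Language α) (n : ℕ) : ℕ :=
  Set.ncard {w : List α | w ∈ L ∧ w.length ≤ n}

/-- Condition (1): `f_𝓛(n) = O(n^d)` for some natural number `d`. -/
def PolyGrowth {α : Type*} (L : Language α) : Prop :=
  ∃ d : ℕ, (fun n : ℕ => (langCount L n : ℝ)) =O[atTop] fun n : ℕ => (n : ℝ) ^ d

/-- Condition (2): `f_𝓛(n) = o(C^n)` for every real `C > 1`. -/
def SubexpGrowth {α : Type*} (L : Language α) : Prop :=
  ∀ C : ℝ, 1 < C → (fun n : ℕ => (langCount L n : ℝ)) =o[atTop] fun n : ℕ => C ^ n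

/-- Condition (3): there are no words `u, v, a, b` with `a, b` nonempty, of the same
length, and `a ≠ b`, such that `u{a,b}*v ⊆ 𝓛`. -/
def NoDoublePump {α : Type*} (L : Language α) : Prop :=
  ¬ ∃ u v a b : List α, a ≠ [] ∧ b ≠ [] ∧ a.length = b.length ∧ a ≠ b ∧
    ∀ s : List (List α), (∀ x ∈ s, x = a ∨ x = b) → (u ++ s.flatten ++ v) ∈ L

/-- Condition (4): `𝓛` is a finite union of languages of the form
`v₁ w₁* v₂ w₂* ⋯ v_k w_k* v_{k+1}` with the `w_i` nonempty. -/
def IsFiniteUnionOfSimpleSparse {α : Type*} (L : Language α) : Prop :=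
  ∃ (n : ℕ) (k : Fin n → ℕ) (v : (i : Fin n) → Fin (k i + 1) → List α)
    (w : (i : Fin n) → Fin (k i) → List α),
    (∀ i j, w i j ≠ []) ∧
    ∀ x : List α, x ∈ L ↔ ∃ (i : Fin n) (e : Fin (k i) → ℕ),
      x = v i 0 ++ (List.ofFn fun j : Fin (k i) =>
        (List.replicate (e j) (w i j)).flatten ++ v i j.succ).flatten

/-!
Fix a DFA for `𝓛`. At a state that is reachable and co-reachable, (3) forbids two distinct
loops of the same length; since `c ++ t` and `t ++ c` are such loops, any two loops commute, and
every loop is a power of a shortest one `r`. Cutting an accepted word at its last return to the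
current state gives a prefix in `r*` followed by a letter and a word that never revisits that
state, so induction on the set of states still allowed writes `𝓛` as a finite union of
languages `v₀ w₀* ⋯ w_{k-1}* v_k`. Such a language has at most `(n + 1)^k` words of length at
most `n`, which gives (4) ⇒ (1); (1) ⇒ (2) is immediate; and `u{a,b}*v ⊆ 𝓛` yields `2^m` words
of length `|uv| + m|a|`, contradicting (2) for `C = 2^(1/|a|)`.
-/

open scoped Computability

theorem List.eq_of_flatten_eq_of_map_length_eq {γ : Type*} :
    ∀ {L₁ L₂ : List (List γ)}, L₁.map length = L₂.map length → L₁.flatten = L₂.flatten →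
      L₁ = L₂
  | [], [], _, _ => rfl
  | x :: L₁, y :: L₂, hlen, h => by
    simp only [List.map_cons, List.cons.injEq] at hlen
    obtain ⟨rfl, h'⟩ := List.append_inj h hlen.1
    rw [List.eq_of_flatten_eq_of_map_length_eq hlen.2 h']

@[simp] theorem Language.mem_singleton_iff {α : Type*} {u x : List α} :
    x ∈ ({u} : Language α) ↔ x = u :=
  Iff.rfl

theorem Language.mem_kstar_singleton_iff {α : Type*} {r x : List α} :
    x ∈ ({r} : Language α)∗ ↔ ∃ n, x = (List.replicate n r).flatten := by
  simp only [Language.mem_kstar, Language.mem_singleton_iff]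
  constructor
  · rintro ⟨L, rfl, hL⟩
    exact ⟨L.length, by rw [← List.eq_replicate_iff.mpr ⟨rfl, hL⟩]⟩
  · rintro ⟨n, rfl⟩
    exact ⟨_, rfl, fun _ => List.eq_of_mem_replicate⟩

/-- The language `v 0 (w 0)* v 1 ⋯ (w (k-1))* v k`, as one member of the union in
`IsFiniteUnionOfSimpleSparse`. -/
structure SimpleSparseExpr (α : Type*) where
  k : ℕ
  v : Fin (k + 1) → List α
  w : Fin k → List α
  w_ne_nil : ∀ j, w j ≠ []

namespace SimpleSparseExpr

variable {α : Type*}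

def word (s : SimpleSparseExpr α) (e : Fin s.k → ℕ) : List α :=
  s.v 0 ++ (List.ofFn fun j => (List.replicate (e j) (s.w j)).flatten ++ s.v j.succ).flatten

def lang (s : SimpleSparseExpr α) : Language α := {x | ∃ e, x = s.word e}

theorem mem_lang {s : SimpleSparseExpr α} {x : List α} : x ∈ s.lang ↔ ∃ e, x = s.word e :=
  Iff.rfl

instance : One (SimpleSparseExpr α) := ⟨⟨0, fun _ => [], Fin.elim0, fun j => j.elim0⟩⟩

def prepend (u : List α) (s : SimpleSparseExpr α) : SimpleSparseExpr α :=
  ⟨s.k, Fin.cons (u ++ s.v 0) (Fin.tail s.v), s.w, s.w_ne_nil⟩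

def prependStar (r : List α) (s : SimpleSparseExpr α) : SimpleSparseExpr α :=
  if hr : r = [] then s else ⟨s.k + 1, Fin.cons [] s.v, Fin.cons r s.w, Fin.cases hr s.w_ne_nil⟩

@[simp] theorem lang_one : (1 : SimpleSparseExpr α).lang = 1 := by
  ext x
  exact ⟨fun ⟨_, hx⟩ => hx, fun hx => ⟨Fin.elim0, hx⟩⟩

theorem lang_prepend (u : List α) (s : SimpleSparseExpr α) :
    (s.prepend u).lang = {u} * s.lang := by
  ext x
  simp [mem_lang, word, prepend, Language.mem_mul, Fin.tail, eq_comm]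

theorem lang_prependStar (r : List α) (s : SimpleSparseExpr α) :
    (s.prependStar r).lang = {r}∗ * s.lang := by
  ext x
  rw [prependStar]
  split_ifs with hr
  · subst hr
    simp [Language.mem_mul, Language.mem_kstar_singleton_iff]
  · simp [mem_lang, word, Language.mem_mul, Language.mem_kstar_singleton_iff, List.ofFn_succ,
      Fin.exists_fin_succ_pi, eq_comm]

theorem le_length_word (s : SimpleSparseExpr α) (e : Fin s.k → ℕ) (j : Fin s.k) :
    e j ≤ (s.word e).length := by
  have hw : 0 < (s.w j).length := List.length_pos_iff.mpr (s.w_ne_nil j)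
  calc e j ≤ e j * (s.w j).length := Nat.le_mul_of_pos_right _ hw
    _ ≤ ∑ i, ((List.replicate (e i) (s.w i)).flatten ++ s.v i.succ).length :=
        le_trans (by simp) (Finset.single_le_sum (fun i _ => Nat.zero_le _) (Finset.mem_univ j))
    _ ≤ (s.word e).length := by simp [word, List.sum_ofFn]

theorem ncard_lang_length_le (s : SimpleSparseExpr α) (m : ℕ) :
    {x | x ∈ s.lang ∧ x.length ≤ m}.ncard ≤ (m + 1) ^ s.k := by
  have hsub : {x | x ∈ s.lang ∧ x.length ≤ m} ⊆
      Set.range fun e : Fin s.k → Fin (m + 1) => s.word fun j => e j := by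
    rintro x ⟨⟨e, rfl⟩, hx⟩
    exact ⟨fun j => ⟨e j, Nat.lt_succ_of_le ((s.le_length_word e j).trans hx)⟩, rfl⟩
  calc _ ≤ (Set.range _).ncard := Set.ncard_le_ncard hsub (Set.finite_range _)
    _ ≤ Nat.card (Fin s.k → Fin (m + 1)) := by
        rw [← Nat.card_coe_set_eq]; exact Finite.card_range_le _
    _ = (m + 1) ^ s.k := by simp

end SimpleSparseExpr

theorem isFiniteUnionOfSimpleSparse_iff {α : Type*} {L : Language α} :
    IsFiniteUnionOfSimpleSparse L ↔
      ∃ F : Set (SimpleSparseExpr α), F.Finite ∧ ∀ x, x ∈ L ↔ ∃ s ∈ F, x ∈ s.lang := by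
  constructor
  · rintro ⟨n, k, v, w, hw, hL⟩
    refine ⟨Set.range fun i => ⟨k i, v i, w i, hw i⟩, Set.finite_range _, fun x => ?_⟩
    simpa [SimpleSparseExpr.mem_lang, SimpleSparseExpr.word] using hL x
  · rintro ⟨F, hF, hL⟩
    have := hF.to_subtype
    let e := (Finite.equivFin F).symm
    refine ⟨Nat.card F, fun i => (e i).1.k, fun i => (e i).1.v, fun i => (e i).1.w,
      fun i => (e i).1.w_ne_nil, fun x => (hL x).trans ⟨?_, ?_⟩⟩
    · rintro ⟨s, hs, hx⟩
      exact ⟨e.symm ⟨s, hs⟩, show x ∈ (e (e.symm ⟨s, hs⟩)).1.lang by rwa [e.apply_symm_apply]⟩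
    · rintro ⟨i, hx⟩
      exact ⟨_, (e i).2, hx⟩

theorem polyGrowth_of_langCount_le {α : Type*} {L : Language α} (C d : ℕ)
    (h : ∀ m, langCount L m ≤ C * (m + 1) ^ d) : PolyGrowth L := by
  refine ⟨d, IsBigO.of_bound (C * 2 ^ d) ?_⟩
  filter_upwards [eventually_ge_atTop 1] with m hm
  have hm' : (m : ℝ) + 1 ≤ 2 * m := by linarith [(by exact_mod_cast hm : (1 : ℝ) ≤ m)]
  simp only [Real.norm_natCast, norm_pow]
  calc (langCount L m : ℝ) ≤ C * ((m : ℝ) + 1) ^ d := by exact_mod_cast h m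
    _ ≤ C * (2 * m) ^ d := by gcongr
    _ = C * 2 ^ d * m ^ d := by ring

theorem IsFiniteUnionOfSimpleSparse.polyGrowth {α : Type*} {L : Language α}
    (h : IsFiniteUnionOfSimpleSparse L) : PolyGrowth L := by
  obtain ⟨F, hF, hL⟩ := isFiniteUnionOfSimpleSparse_iff.mp h
  set K := hF.toFinset.sup SimpleSparseExpr.k
  refine polyGrowth_of_langCount_le hF.toFinset.card K fun m => ?_
  have hcover : {x | x ∈ L ∧ x.length ≤ m} =
      ⋃ s ∈ hF.toFinset, {x | x ∈ s.lang ∧ x.length ≤ m} := by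
    ext x
    simp only [hL, Set.mem_ofPred_eq, Set.mem_iUnion, Set.Finite.mem_toFinset, exists_prop]
    tauto
  calc langCount L m ≤ ∑ s ∈ hF.toFinset, {x | x ∈ s.lang ∧ x.length ≤ m}.ncard := by
        rw [langCount, hcover]; exact Finset.set_ncard_biUnion_le _ _
    _ ≤ ∑ _s ∈ hF.toFinset, (m + 1) ^ K := Finset.sum_le_sum fun s hs =>
        ((s.ncard_lang_length_le m).trans (Nat.pow_le_pow_right m.succ_pos (Finset.le_sup hs)))
    _ = hF.toFinset.card * (m + 1) ^ K := by simp

theorem PolyGrowth.subexpGrowth {α : Type*} {L : Language α} (h : PolyGrowth L) :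
    SubexpGrowth L := fun _C hC =>
  let ⟨d, hd⟩ := h
  hd.trans_isLittleO (isLittleO_pow_const_const_pow_of_one_lt d hC)

theorem two_pow_le_langCount {α : Type*} [Finite α] {L : Language α} {u v a b : List α}
    (hlen : a.length = b.length) (hab : a ≠ b)
    (hL : ∀ s : List (List α), (∀ x ∈ s, x = a ∨ x = b) → u ++ s.flatten ++ v ∈ L) (m : ℕ) :
    2 ^ m ≤ langCount L (u.length + v.length + m * a.length) := by
  let block : Bool → List α := fun c => if c then a else b
  have hblock : ∀ c, (block c).length = a.length := by
    intro c; cases c <;> simp [block, hlen]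
  have hblock_inj : block.Injective := by
    intro c c' h; cases c <;> cases c' <;> simp_all [block, eq_comm]
  let f : (Fin m → Bool) → List α := fun t => u ++ (List.ofFn fun i => block (t i)).flatten ++ v
  have hf : f.Injective := by
    intro t t' h
    have hflat := List.append_cancel_left (List.append_cancel_right h)
    have hofFn := List.eq_of_flatten_eq_of_map_length_eq (by simp [Function.comp_def, hblock]) hflat
    exact funext fun i => hblock_inj (congrFun (List.ofFn_injective hofFn) i)
  have hrange : Set.range f ⊆ {x | x ∈ L ∧ x.length ≤ u.length + v.length + m * a.length} := by
    rintro _ ⟨t, rfl⟩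
    refine ⟨hL _ fun x hx => ?_, ?_⟩
    · obtain ⟨i, rfl⟩ := List.mem_ofFn.mp hx
      cases t i <;> simp [block]
    · simp only [f, List.length_append, List.length_flatten, List.map_ofFn, List.sum_ofFn,
        Function.comp_apply, hblock, Finset.sum_const, Finset.card_univ, Fintype.card_fin,
        smul_eq_mul]
      omega
  calc 2 ^ m = (Set.range f).ncard := by simp [Set.ncard_range_of_injective hf]
    _ ≤ langCount L (u.length + v.length + m * a.length) :=
        Set.ncard_le_ncard hrange ((List.finite_length_le α _).subset fun _ hx => hx.2)

theorem SubexpGrowth.noDoublePump {α : Type*} [Finite α] {L : Language α}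
    (h : SubexpGrowth L) : NoDoublePump L := by
  rintro ⟨u, v, a, b, ha, -, hlen, hab, hL⟩
  set ℓ := a.length
  set c₀ := u.length + v.length
  have hℓ : 0 < ℓ := List.length_pos_iff.mpr ha
  let C : ℝ := 2 ^ (ℓ⁻¹ : ℝ)
  have hC : 1 < C := Real.one_lt_rpow (by norm_num) (by positivity)
  have hCℓ : C ^ ℓ = 2 := Real.rpow_inv_natCast_pow (by norm_num) hℓ.ne'
  have hlim : Tendsto (fun m : ℕ => c₀ + m * ℓ) atTop atTop :=
    tendsto_atTop_mono (fun m => le_add_left (Nat.le_mul_of_pos_right m hℓ)) tendsto_id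
  obtain ⟨m, hm⟩ := (((h C hC).comp_tendsto hlim).def (c := (2 * C ^ c₀)⁻¹)
    (by positivity)).exists
  have hlow : (2 : ℝ) ^ m ≤ langCount L (c₀ + m * ℓ) := by
    exact_mod_cast two_pow_le_langCount hlen hab hL m
  have hCpow : C ^ (c₀ + m * ℓ) = C ^ c₀ * 2 ^ m := by rw [pow_add, pow_mul', hCℓ]
  rw [Function.comp_apply, Function.comp_apply, hCpow, Real.norm_natCast,
    Real.norm_of_nonneg (by positivity)] at hm
  have : (2 * C ^ c₀)⁻¹ * (C ^ c₀ * 2 ^ m) = (2 : ℝ) ^ m / 2 := by field_simp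
  linarith [pow_pos (two_pos : (0 : ℝ) < 2) m]

namespace DFA

variable {α σ : Type*} (M : DFA α σ)

theorem evalFrom_flatten_of_forall_eq_self {q : σ} {l : List (List α)}
    (h : ∀ x ∈ l, M.evalFrom q x = q) : M.evalFrom q l.flatten = q := by
  induction l with
  | nil => rfl
  | cons x l ih =>
    rw [List.flatten_cons, evalFrom_of_append, h x List.mem_cons_self,
      ih fun y hy => h y (List.mem_cons_of_mem x hy)]

theorem eq_of_evalFrom_eq_self_of_noDoublePump (hND : NoDoublePump M.accepts) {q : σ}
    {u v c d : List α} (hu : M.eval u = q) (hv : M.evalFrom q v ∈ M.accept)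
    (hc : M.evalFrom q c = q) (hd : M.evalFrom q d = q) (hc₀ : c ≠ [])
    (hlen : c.length = d.length) : c = d := by
  by_contra hcd
  have hd₀ : d ≠ [] := List.ne_nil_of_length_pos (hlen ▸ List.length_pos_iff.mpr hc₀)
  refine hND ⟨u, v, c, d, hc₀, hd₀, hlen, hcd, fun s hs => ?_⟩
  have hloop : M.evalFrom q s.flatten = q :=
    M.evalFrom_flatten_of_forall_eq_self fun x hx => by rcases hs x hx with rfl | rfl <;> assumption
  rw [mem_accepts, eval, evalFrom_of_append, evalFrom_of_append, ← eval, hu, hloop]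
  exact hv

theorem mem_kstar_of_evalFrom_eq_self (hND : NoDoublePump M.accepts) {q : σ}
    {u v t : List α} (hu : M.eval u = q) (hv : M.evalFrom q v ∈ M.accept)
    (ht : M.evalFrom q t = q) (ht₀ : t ≠ [])
    (hmin : ∀ c, c ≠ [] → M.evalFrom q c = q → t.length ≤ c.length) {c : List α}
    (hc : M.evalFrom q c = q) : c ∈ ({t} : Language α)∗ := by
  induction hn : c.length using Nat.strong_induction_on generalizing c with
  | _ n ih =>
  rcases eq_or_ne c [] with rfl | hc₀
  · exact Language.nil_mem_kstar _
  have hcomm : c ++ t = t ++ c :=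
    M.eq_of_evalFrom_eq_self_of_noDoublePump hND hu hv (by simp [evalFrom_of_append, hc, ht])
      (by simp [evalFrom_of_append, hc, ht]) (by simp [hc₀]) (by simp [Nat.add_comm])
  have hsplit : c = t ++ c.drop t.length := by
    have := congrArg (List.take t.length) hcomm
    rw [List.take_append_of_le_length (hmin c hc₀ hc), List.take_left] at this
    conv_lhs => rw [← List.take_append_drop t.length c, this]
  have hc' : M.evalFrom q (c.drop t.length) = q := by
    rwa [hsplit, evalFrom_of_append, ht] at hc
  obtain ⟨k, hk⟩ := Language.mem_kstar_singleton_iff.mp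
    (ih _ (by simp [← hn, List.length_pos_iff.mpr ht₀, List.length_pos_iff.mpr hc₀]) hc' rfl)
  exact Language.mem_kstar_singleton_iff.mpr ⟨k + 1, by rw [hsplit, hk]; simp [List.replicate_succ]⟩

theorem exists_evalFrom_eq_self_iff_mem_kstar (hND : NoDoublePump M.accepts) {q : σ}
    {u v : List α} (hu : M.eval u = q) (hv : M.evalFrom q v ∈ M.accept) :
    ∃ r : List α, ∀ c, M.evalFrom q c = q ↔ c ∈ ({r} : Language α)∗ := by
  by_cases hloop : {t | t ≠ [] ∧ M.evalFrom q t = q}.Nonempty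
  · obtain ⟨t, ⟨ht₀, ht⟩, hmin⟩ := (measure List.length).wf.has_min _ hloop
    exact ⟨t, fun c => ⟨M.mem_kstar_of_evalFrom_eq_self hND hu hv ht ht₀
      (fun c hc₀ hc => not_lt.mp (hmin c ⟨hc₀, hc⟩)), fun hc => M.evalFrom_of_pow ht hc⟩⟩
  · refine ⟨[], fun c => ⟨fun hc => ?_, fun hc => M.evalFrom_of_pow rfl hc⟩⟩
    obtain rfl : c = [] := by_contra fun hc₀ => hloop ⟨c, hc₀, hc⟩
    exact Language.nil_mem_kstar _

theorem exists_eq_append_of_last_visit (q : σ) (x : List α) :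
    ∃ c r, x = c ++ r ∧ M.evalFrom q c = q ∧
      ∀ p, p <+: r → p ≠ [] → M.evalFrom q (c ++ p) ≠ q := by
  induction x using List.reverseRecOn with
  | nil => exact ⟨[], [], rfl, rfl, fun p hp hp₀ => absurd (List.prefix_nil.mp hp) hp₀⟩
  | append_singleton x a ih =>
    by_cases hxa : M.evalFrom q (x ++ [a]) = q
    · exact ⟨x ++ [a], [], by simp, hxa, fun p hp hp₀ => absurd (List.prefix_nil.mp hp) hp₀⟩
    obtain ⟨c, r, rfl, hc, hr⟩ := ih
    refine ⟨c, r ++ [a], by simp, hc, fun p hp hp₀ => ?_⟩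
    rcases List.prefix_concat_iff.mp hp with rfl | hp
    · simpa using hxa
    · exact hr p hp hp₀

theorem evalFrom_step_mem_erase_of_last_visit [DecidableEq σ] {S : Finset σ} {q : σ}
    {c y p : List α} {a : α} (hc : M.evalFrom q c = q)
    (hlast : ∀ p, p <+: a :: y → p ≠ [] → M.evalFrom q (c ++ p) ≠ q)
    (hS : ∀ p, p <+: c ++ a :: y → M.evalFrom q p ∈ S) (hp : p <+: y) :
    M.evalFrom (M.step q a) p ∈ S.erase q := by
  have hp' : a :: p <+: a :: y := List.cons_prefix_cons.mpr ⟨rfl, hp⟩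
  have hne := hlast (a :: p) hp' (List.cons_ne_nil _ _)
  have hmem := hS (c ++ a :: p) ((List.prefix_append_right_inj c).mpr hp')
  rw [evalFrom_of_append, hc, evalFrom_cons] at hne hmem
  exact Finset.mem_erase.mpr ⟨hne, hmem⟩

theorem exists_finite_simpleSparse_cover [Finite α] (hND : NoDoublePump M.accepts)
    (S : Finset σ) (q : σ) (hq : ∃ u, M.eval u = q) :
    ∃ F : Set (SimpleSparseExpr α), F.Finite ∧ (∀ s ∈ F, ∀ y ∈ s.lang, y ∈ M.acceptsFrom q) ∧
      ∀ x ∈ M.acceptsFrom q, (∀ p, p <+: x → M.evalFrom q p ∈ S) → ∃ s ∈ F, x ∈ s.lang := by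
  induction S using Finset.strongInduction generalizing q with
  | H S ih =>
  classical
  by_cases hS : q ∈ S ∧ ∃ v, M.evalFrom q v ∈ M.accept
  swap
  · exact ⟨∅, Set.finite_empty, by simp,
      fun x hx hxS => (hS ⟨hxS [] List.nil_prefix, x, hx⟩).elim⟩
  obtain ⟨hqS, v, hv⟩ := hS
  obtain ⟨u, hu⟩ := hq
  obtain ⟨r, hr⟩ := M.exists_evalFrom_eq_self_iff_mem_kstar hND hu hv
  choose F hF hFsound hFcover using fun a =>
    ih (S.erase q) (Finset.erase_ssubset hqS) (M.step q a) ⟨u ++ [a], by simp [hu]⟩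
  refine ⟨{s | q ∈ M.accept ∧ s = (1 : SimpleSparseExpr α).prependStar r} ∪
    ⋃ a, (fun s => (s.prepend [a]).prependStar r) '' F a,
    ((Set.finite_singleton _).subset fun _ hs => hs.2).union
      (Set.finite_iUnion fun a => (hF a).image _), ?_, ?_⟩
  · rintro s (⟨hq, rfl⟩ | hs) y hy
    · rw [SimpleSparseExpr.lang_prependStar, SimpleSparseExpr.lang_one, mul_one] at hy
      rwa [mem_acceptsFrom, (hr y).mpr hy]
    · obtain ⟨a, s', hs', rfl⟩ := by simpa using hs
      rw [SimpleSparseExpr.lang_prependStar, SimpleSparseExpr.lang_prepend] at hy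
      obtain ⟨c, hc, _, ⟨_, rfl, y', hy', rfl⟩, rfl⟩ := Language.mem_mul.mp hy
      rw [mem_acceptsFrom, evalFrom_of_append, (hr c).mpr hc]
      exact hFsound a s' hs' y' hy'
  · intro x hx hxS
    obtain ⟨c, t, rfl, hc, hlast⟩ := M.exists_eq_append_of_last_visit q x
    rw [mem_acceptsFrom, evalFrom_of_append, hc] at hx
    cases t with
    | nil =>
      refine ⟨_, Or.inl ⟨hx, rfl⟩, ?_⟩
      rw [SimpleSparseExpr.lang_prependStar, SimpleSparseExpr.lang_one, mul_one, List.append_nil]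
      exact (hr c).mp hc
    | cons a y =>
      obtain ⟨s, hs, hys⟩ :=
        hFcover a y hx fun p => M.evalFrom_step_mem_erase_of_last_visit hc hlast hxS
      refine ⟨_, Or.inr (Set.mem_iUnion.mpr ⟨a, s, hs, rfl⟩), ?_⟩
      rw [SimpleSparseExpr.lang_prependStar, SimpleSparseExpr.lang_prepend]
      exact Language.append_mem_mul ((hr c).mp hc)
        (Language.append_mem_mul (Language.mem_singleton_iff.mpr rfl) hys)

theorem isFiniteUnionOfSimpleSparse_accepts [Finite α] [Fintype σ]
    (hND : NoDoublePump M.accepts) : IsFiniteUnionOfSimpleSparse M.accepts := by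
  obtain ⟨F, hF, hsound, hcover⟩ :=
    M.exists_finite_simpleSparse_cover hND Finset.univ M.start ⟨[], rfl⟩
  exact isFiniteUnionOfSimpleSparse_iff.mpr ⟨F, hF, fun x =>
    ⟨fun hx => hcover x hx fun _ _ => Finset.mem_univ _, fun ⟨s, hs, hx⟩ => hsound s hs x hx⟩⟩

end DFA

/-- For a regular language `𝓛` over a finite alphabet, the four
sparseness conditions (1)–(4) are equivalent. -/
theorem sparse_regular_tfae {α : Type*} [Fintype α] (L : Language α)
    (hL : L.IsRegular) :
    (PolyGrowth L ↔ SubexpGrowth L) ∧ (PolyGrowth L ↔ NoDoublePump L) ∧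
    (PolyGrowth L ↔ IsFiniteUnionOfSimpleSparse L) := by
  obtain ⟨σ, _, M, rfl⟩ := hL
  have h12 : PolyGrowth M.accepts → SubexpGrowth M.accepts := PolyGrowth.subexpGrowth
  have h23 : SubexpGrowth M.accepts → NoDoublePump M.accepts := SubexpGrowth.noDoublePump
  have h34 : NoDoublePump M.accepts → IsFiniteUnionOfSimpleSparse M.accepts :=
    M.isFiniteUnionOfSimpleSparse_accepts
  have h41 : IsFiniteUnionOfSimpleSparse M.accepts → PolyGrowth M.accepts :=
    IsFiniteUnionOfSimpleSparse.polyGrowth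
  exact ⟨⟨h12, h41 ∘ h34 ∘ h23⟩, ⟨h23 ∘ h12, h41 ∘ h34⟩, ⟨h34 ∘ h23 ∘ h12, h41⟩⟩
end
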